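/- arXiv:0801.1079 — 4 statements merged into one kernel-verified Lean document; each statement's English description precedes it below -/
import Mathlib

section
/- Let 0 < ᾱ < 1/(τ−1) and let α_0 = α_0(N), α_1 = α_1(N) ∈ (0, ᾱ) satisfy α_0(N) ≤ α_1(N) − ε(N). Then, for all sufficiently large N, P( Σ_{i=1}^N Λ_i·1{Λ_i ∈ (N^{α_0}, N^{α_1}]} / (N^{1−(τ−2)α_0}·E[Λ]) ∈ (1/5, 5) ) ≥ 1 − 2·(E[Λ]/2)^{−(τ−1)} · N^{−(1−(τ−1)ᾱ)(τ−2)}. -/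
/-! Only the tier `(a, b] = (N^α₀, N^α₁]` contributes, so truncate each capacity to it. The Pareto
density gives the truncated mean `E[Λ] (a^(2-τ) - b^(2-τ))` and a second moment of at most
`(τ-1)/(3-τ) b^(3-τ)`. Since `ℓ(N) → ∞`, the gap `α₁ - α₀ ≥ ε(N)` makes `b^(2-τ) ≤ a^(2-τ) / 4`, so
the mean of the tier sum lies in `[3m/4, m]` for `m = N a^(2-τ) E[Λ]`. Chebyshev's inequality at
distance `m/2` bounds the failure probability by `4 N (τ-1)/(3-τ) b^(3-τ) / m²`, which is of order
`N^((τ-1)ᾱ - 1)` and therefore eventually below `2 (E[Λ]/2)^(-(τ-1)) N^(-(1-(τ-1)ᾱ)(τ-2))`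
because `τ - 2 < 1`. -/

open MeasureTheory ProbabilityTheory Filter Set
open scoped NNReal ENNReal

noncomputable section

/-- The standing assumptions on the auxiliary function `ℓ`:
increasing, `ℓ 1 = 1`, `ℓ(N)/logloglog N → 0` and `ℓ(N)/loglogloglog N → ∞`. -/
def IsAdmissibleEll (ℓ : ℕ → ℝ) : Prop :=
  StrictMono ℓ ∧ ℓ 1 = 1 ∧
    Tendsto (fun N : ℕ => ℓ N / Real.log (Real.log (Real.log N))) atTop (nhds 0) ∧
    Tendsto (fun N : ℕ => ℓ N / Real.log (Real.log (Real.log (Real.log N)))) atTop atTop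

/-- `ε(N) = ℓ(N) / log N`. -/
def epsFun (ℓ : ℕ → ℝ) (N : ℕ) : ℝ := ℓ N / Real.log N

lemma paretoMeasure_Ioi {r : ℝ} (hr : 0 < r) {x : ℝ} (hx : 1 ≤ x) :
    paretoMeasure 1 r (Ioi x) = ENNReal.ofReal (x ^ (-r)) := by
  have hx0 : 0 < x := one_pos.trans_le hx
  have hpdf : ∀ y ∈ Ioi x, paretoPDF 1 r y = ENNReal.ofReal (r * y ^ (-(r + 1))) := fun y hy => by
    rw [paretoPDF_of_le (hx.trans (le_of_lt hy)), Real.one_rpow, mul_one]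
  have hint : IntegrableOn (fun y => r * y ^ (-(r + 1))) (Ioi x) :=
    (integrableOn_Ioi_rpow_of_lt (by linarith) hx0).const_mul r
  rw [paretoMeasure, withDensity_apply _ measurableSet_Ioi,
    setLIntegral_congr_fun measurableSet_Ioi hpdf,
    ← ofReal_integral_eq_lintegral_ofReal hint
      ((ae_restrict_iff' measurableSet_Ioi).2 (ae_of_all _ fun y hy =>
        by have : 0 < y := hx0.trans hy; positivity)),
    integral_const_mul, integral_Ioi_rpow_of_lt (by linarith) hx0,
    show -(r + 1) + 1 = -r by ring]
  congr 1
  field_simp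

lemma map_eq_paretoMeasure_of_tail {Ω : Type*} [MeasurableSpace Ω] {μ : Measure Ω}
    [IsProbabilityMeasure μ] {f : Ω → ℝ} (hf : Measurable f) {r : ℝ} (hr : 0 < r)
    (htail : ∀ x, 1 ≤ x → μ {ω | x < f ω} = ENNReal.ofReal (x ^ (-r))) :
    μ.map f = paretoMeasure 1 r := by
  have := isProbabilityMeasure_paretoMeasure one_pos hr
  have := Measure.isProbabilityMeasure_map (μ := μ) hf.aemeasurable
  have hIoi : ∀ x, 1 ≤ x → μ.map f (Ioi x) = paretoMeasure 1 r (Ioi x) := fun x hx => by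
    rw [Measure.map_apply hf measurableSet_Ioi, paretoMeasure_Ioi hr hx]
    exact htail x hx
  have hIoi_one : paretoMeasure 1 r (Ioi 1) = 1 := by
    rw [paretoMeasure_Ioi hr le_rfl, Real.one_rpow, ENNReal.ofReal_one]
  have hIic_null : ∀ (ν : Measure ℝ) [IsProbabilityMeasure ν], ν (Ioi 1) = 1 →
      ∀ x < 1, ν (Iic x) = 0 := fun ν _ hν x hx =>
    measure_mono_null (Iic_subset_Iic.2 hx.le) <| by
      rw [← compl_Ioi, prob_compl_eq_one_sub measurableSet_Ioi, hν, tsub_self]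
  refine Measure.ext_of_Iic _ _ fun x => ?_
  rcases le_or_gt 1 x with hx | hx
  · rw [← compl_Ioi, prob_compl_eq_one_sub measurableSet_Ioi,
      prob_compl_eq_one_sub measurableSet_Ioi, hIoi x hx]
  · rw [hIic_null _ ((hIoi 1 le_rfl).trans hIoi_one) x hx, hIic_null _ hIoi_one x hx]

lemma integral_indicator_Ioc_pow_paretoMeasure {r : ℝ} (hr : 0 < r) (k : ℕ) (hk : (k : ℝ) ≠ r)
    {a b : ℝ} (ha : 1 ≤ a) (hab : a ≤ b) :
    ∫ x, (Ioc a b).indicator (fun x => x ^ k) x ∂paretoMeasure 1 r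
      = r / (r - k) * (a ^ ((k : ℝ) - r) - b ^ ((k : ℝ) - r)) := by
  have ha0 : 0 < a := one_pos.trans_le ha
  have hdensity : ∀ x ∈ Ioc a b, paretoPDFReal 1 r x * x ^ k = r * x ^ ((k : ℝ) - r - 1) := by
    intro x hx
    have hx0 : 0 < x := ha0.trans hx.1
    rw [paretoPDFReal, if_pos (ha.trans hx.1.le), Real.one_rpow, mul_one, mul_assoc,
      ← Real.rpow_natCast x k, ← Real.rpow_add hx0]
    ring_nf
  have hsmul : (fun x => (paretoPDFReal 1 r x).toNNReal • (Ioc a b).indicator (fun x => x ^ k) x)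
      = (Ioc a b).indicator (fun x => paretoPDFReal 1 r x * x ^ k) := by
    funext x
    rw [NNReal.smul_def, smul_eq_mul,
      Real.coe_toNNReal _ (paretoPDFReal_nonneg zero_le_one hr.le x),
      indicator_mul_right]
  have hk' : (k : ℝ) - r ≠ 0 := sub_ne_zero.2 hk
  rw [paretoMeasure, show paretoPDF 1 r = fun x => ((paretoPDFReal 1 r x).toNNReal : ℝ≥0∞) from rfl,
    integral_withDensity_eq_integral_smul (measurable_paretoPDFReal 1 r).real_toNNReal, hsmul,
    integral_indicator measurableSet_Ioc, setIntegral_congr_fun measurableSet_Ioc hdensity,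
    ← intervalIntegral.integral_of_le hab, intervalIntegral.integral_const_mul,
    integral_rpow (Or.inr ⟨by simpa using hk', fun h0 => by
      rw [uIcc_of_le hab] at h0; linarith [h0.1]⟩), show (k : ℝ) - r - 1 + 1 = k - r by ring]
  field_simp
  ring

section Tier

variable {ι Ω : Type*} [Fintype ι]

def tierSum (a b : ℝ) (Λ : ι → Ω → ℝ) (ω : Ω) : ℝ :=
  ∑ i, (Ioc a b).indicator id (Λ i ω)

lemma tierSum_eq_sum (a b : ℝ) (Λ : ι → Ω → ℝ) :
    tierSum a b Λ = ∑ i, (Ioc a b).indicator id ∘ Λ i := by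
  ext ω
  simp only [tierSum, Finset.sum_apply, Function.comp_apply]

variable [MeasurableSpace Ω] {μ : Measure Ω}
  {Λ : ι → Ω → ℝ} {f : Ω → ℝ} {τ a b : ℝ}

lemma integral_indicator_Ioc_pow_comp (hf : Measurable f) (hlaw : μ.map f = paretoMeasure 1 (τ - 1))
    (hτ : 1 < τ) (k : ℕ) (hk : (k : ℝ) ≠ τ - 1) (ha : 1 ≤ a) (hab : a ≤ b) :
    ∫ ω, (Ioc a b).indicator (fun x => x ^ k) (f ω) ∂μ
      = (τ - 1) / (τ - 1 - k) * (a ^ ((k : ℝ) - (τ - 1)) - b ^ ((k : ℝ) - (τ - 1))) := by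
  rw [← integral_map hf.aemeasurable
      ((by fun_prop : Measurable fun x : ℝ => x ^ k).indicator
        measurableSet_Ioc).aestronglyMeasurable, hlaw,
    integral_indicator_Ioc_pow_paretoMeasure (by linarith) k hk ha hab]

lemma integral_indicator_Ioc_comp (hf : Measurable f)
    (hlaw : μ.map f = paretoMeasure 1 (τ - 1)) (hτ : 1 < τ) (hτ2 : τ ≠ 2)
    (ha : 1 ≤ a) (hab : a ≤ b) :
    ∫ ω, (Ioc a b).indicator id (f ω) ∂μ = (τ - 1) / (τ - 2) * (a ^ (2 - τ) - b ^ (2 - τ)) := by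
  have h := integral_indicator_Ioc_pow_comp hf hlaw hτ 1 (by norm_num; contrapose! hτ2; linarith)
    ha hab
  simp only [pow_one, Nat.cast_one] at h
  rw [show (id : ℝ → ℝ) = fun x => x from rfl, h]
  ring_nf

lemma integral_indicator_Ioc_comp_sq (hf : Measurable f)
    (hlaw : μ.map f = paretoMeasure 1 (τ - 1)) (hτ : 1 < τ) (hτ3 : τ ≠ 3)
    (ha : 1 ≤ a) (hab : a ≤ b) :
    μ[((Ioc a b).indicator id ∘ f) ^ 2] = (τ - 1) / (3 - τ) * (b ^ (3 - τ) - a ^ (3 - τ)) := by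
  have h := integral_indicator_Ioc_pow_comp hf hlaw hτ 2 (by norm_num; contrapose! hτ3; linarith)
    ha hab
  have hsq : ∀ x, (Ioc a b).indicator id x ^ 2 = (Ioc a b).indicator (fun x => x ^ 2) x :=
    fun x => by by_cases hx : x ∈ Ioc a b <;> simp [hx]
  simp only [Pi.pow_apply, Function.comp_apply, hsq, h, Nat.cast_ofNat,
    show (2 : ℝ) - (τ - 1) = 3 - τ by ring, show τ - 1 - 2 = -(3 - τ) by ring, div_neg]
  ring

variable [IsProbabilityMeasure μ]

lemma memLp_indicator_Ioc_comp (hf : Measurable f) (p : ℝ≥0∞) :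
    MemLp ((Ioc a b).indicator id ∘ f) p μ := by
  have hmeas : Measurable ((Ioc a b).indicator id ∘ f) :=
    (measurable_id.indicator measurableSet_Ioc).comp hf
  refine (memLp_top_of_bound hmeas.aestronglyMeasurable (max |a| |b|)
    (ae_of_all _ fun ω => ?_)).mono_exponent le_top
  by_cases h : f ω ∈ Ioc a b
  · simpa only [Function.comp_apply, indicator_of_mem h, id, Real.norm_eq_abs]
      using abs_le_max_abs_abs h.1.le h.2
  · simp only [Function.comp_apply, indicator_of_notMem h, norm_zero]
    positivity

lemma integral_tierSum (hmeas : ∀ i, Measurable (Λ i))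
    (hlaw : ∀ i, μ.map (Λ i) = paretoMeasure 1 (τ - 1)) (hτ : 1 < τ) (hτ2 : τ ≠ 2)
    (ha : 1 ≤ a) (hab : a ≤ b) :
    μ[tierSum a b Λ] = Fintype.card ι * ((τ - 1) / (τ - 2) * (a ^ (2 - τ) - b ^ (2 - τ))) := by
  simp only [tierSum]
  rw [integral_finsetSum (f := fun i ω => (Ioc a b).indicator id (Λ i ω)) _ fun i _ =>
    (memLp_indicator_Ioc_comp (hmeas i) 1).integrable le_rfl]
  simp only [integral_indicator_Ioc_comp (hmeas _) (hlaw _) hτ hτ2 ha hab,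
    Finset.sum_const, Finset.card_univ, nsmul_eq_mul]

lemma variance_tierSum_le (hmeas : ∀ i, Measurable (Λ i)) (hindep : iIndepFun Λ μ)
    (hlaw : ∀ i, μ.map (Λ i) = paretoMeasure 1 (τ - 1)) (hτ : 1 < τ) (hτ3 : τ < 3)
    (ha : 1 ≤ a) (hab : a ≤ b) :
    variance (tierSum a b Λ) μ ≤ Fintype.card ι * ((τ - 1) / (3 - τ) * b ^ (3 - τ)) := by
  have hX := fun i => memLp_indicator_Ioc_comp (μ := μ) (a := a) (b := b) (hmeas i) 2
  have hvar : ∀ i, variance ((Ioc a b).indicator id ∘ Λ i) μ ≤ (τ - 1) / (3 - τ) * b ^ (3 - τ) :=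
    fun i => calc
      _ ≤ μ[((Ioc a b).indicator id ∘ Λ i) ^ 2] := variance_le_expectation_sq (hX i).1
      _ = (τ - 1) / (3 - τ) * (b ^ (3 - τ) - a ^ (3 - τ)) :=
        integral_indicator_Ioc_comp_sq (hmeas i) (hlaw i) hτ hτ3.ne ha hab
      _ ≤ (τ - 1) / (3 - τ) * b ^ (3 - τ) :=
        mul_le_mul_of_nonneg_left (sub_le_self _ (by positivity))
          (div_nonneg (by linarith) (by linarith))
  rw [tierSum_eq_sum, IndepFun.variance_sum (fun i _ => hX i) fun i _ j _ hij =>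
    (hindep.comp _ fun _ => measurable_id.indicator measurableSet_Ioc).indepFun hij]
  exact (Finset.sum_le_card_nsmul _ _ _ fun i _ => hvar i).trans_eq
    (by rw [Finset.card_univ, nsmul_eq_mul])

lemma one_sub_variance_div_sq_le_measure {X : Ω → ℝ} (hX : MemLp X 2 μ) {c : ℝ} (hc : 0 < c) :
    1 - ENNReal.ofReal (variance X μ / c ^ 2) ≤ μ {ω | |X ω - μ[X]| < c} := by
  have hnull : NullMeasurableSet {ω | c ≤ |X ω - μ[X]|} μ :=
    nullMeasurableSet_le aemeasurable_const (hX.aestronglyMeasurable.aemeasurable.sub_const _).abs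
  calc 1 - ENNReal.ofReal (variance X μ / c ^ 2) ≤ 1 - μ {ω | c ≤ |X ω - μ[X]|} :=
        tsub_le_tsub_left (meas_ge_le_variance_div_sq hX hc) 1
    _ = μ {ω | |X ω - μ[X]| < c} := by
        rw [← prob_compl_eq_one_sub₀ hnull]
        congr 1
        ext ω
        simp [not_le]

lemma tierSum_concentration [Nonempty ι] (hmeas : ∀ i, Measurable (Λ i)) (hindep : iIndepFun Λ μ)
    (hlaw : ∀ i, μ.map (Λ i) = paretoMeasure 1 (τ - 1)) (hτ : τ ∈ Ioo 2 3)
    (ha : 1 ≤ a) (hab : a ≤ b) (hgap : 4 * b ^ (2 - τ) ≤ a ^ (2 - τ)) :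
    1 - ENNReal.ofReal (Fintype.card ι * ((τ - 1) / (3 - τ) * b ^ (3 - τ)) /
        (Fintype.card ι * a ^ (2 - τ) * ((τ - 1) / (τ - 2)) / 2) ^ 2)
      ≤ μ {ω | tierSum a b Λ ω / (Fintype.card ι * a ^ (2 - τ) * ((τ - 1) / (τ - 2))) ∈
          Ioo (1 / 5 : ℝ) 5} := by
  obtain ⟨hτ2, hτ3⟩ := hτ
  set m := Fintype.card ι * a ^ (2 - τ) * ((τ - 1) / (τ - 2))
  have hE : 0 < (τ - 1) / (τ - 2) := div_pos (by linarith) (by linarith)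
  have hcard : (0 : ℝ) < Fintype.card ι := Nat.cast_pos.2 Fintype.card_pos
  have hm : 0 < m := mul_pos (mul_pos hcard (Real.rpow_pos_of_pos (by linarith) _)) hE
  have hmean := integral_tierSum hmeas hlaw (by linarith) hτ2.ne' ha hab (μ := μ)
  have hmean_lo : 3 / 4 * m ≤ μ[tierSum a b Λ] := by
    have : Fintype.card ι * b ^ (2 - τ) * ((τ - 1) / (τ - 2)) ≤ m / 4 := by
      have := mul_le_mul_of_nonneg_right hgap (mul_pos hcard hE).le
      simp only [m]
      nlinarith
    rw [hmean]; linarith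
  have hmean_hi : μ[tierSum a b Λ] ≤ m := by
    have : 0 ≤ Fintype.card ι * b ^ (2 - τ) * ((τ - 1) / (τ - 2)) :=
      mul_nonneg (mul_nonneg hcard.le (Real.rpow_nonneg (by linarith) _)) hE.le
    rw [hmean]; linarith
  have hS : MemLp (tierSum a b Λ) 2 μ := by
    rw [tierSum_eq_sum]
    exact memLp_finsetSum' _ fun i _ => memLp_indicator_Ioc_comp (hmeas i) 2
  -- Chebyshev at distance `m / 2`: given the bounds on the mean, the sum then lies in `(m/4, 3m/2)`.
  refine le_trans ?_ ((one_sub_variance_div_sq_le_measure hS (half_pos hm)).trans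
    (measure_mono fun ω (hω : |_ - _| < m / 2) => ?_))
  · gcongr
    exact variance_tierSum_le hmeas hindep hlaw (by linarith) hτ3 ha hab
  · obtain ⟨hlo, hhi⟩ := abs_lt.1 hω
    constructor
    · rw [lt_div_iff₀ hm]; linarith
    · rw [div_lt_iff₀ hm]; linarith

end Tier

lemma IsAdmissibleEll.tendsto_atTop {ℓ : ℕ → ℝ} (hℓ : IsAdmissibleEll ℓ) :
    Tendsto ℓ atTop atTop := by
  set d : ℕ → ℝ := fun N => Real.log (Real.log (Real.log (Real.log N)))
  have hd : Tendsto d atTop atTop :=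
    (Real.tendsto_log_atTop.comp <| Real.tendsto_log_atTop.comp <| Real.tendsto_log_atTop.comp <|
      Real.tendsto_log_atTop).comp tendsto_natCast_atTop_atTop
  refine (hℓ.2.2.2.atTop_mul_atTop₀ hd).congr' ?_
  filter_upwards [hd.eventually_gt_atTop 0] with N hN
  exact div_mul_cancel₀ _ hN.ne'

lemma mul_rpow_rpow {x : ℝ} (hx : 0 < x) (y z : ℝ) : x * (x ^ y) ^ z = x ^ (1 + y * z) := by
  rw [← Real.rpow_mul hx.le, Real.rpow_add hx, Real.rpow_one]

lemma four_mul_rpow_le_of_gap {τ N ℓ α₀ α₁ : ℝ} (hτ : 2 < τ) (hN : 1 < N)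
    (hℓ : Real.log 4 / (τ - 2) ≤ ℓ) (hgap : α₀ ≤ α₁ - ℓ / Real.log N) :
    4 * (N ^ α₁) ^ (2 - τ) ≤ (N ^ α₀) ^ (2 - τ) := by
  have hlogN : 0 < Real.log N := Real.log_pos hN
  have h4 : Real.log 4 ≤ (τ - 2) * ((α₁ - α₀) * Real.log N) := by
    rw [div_le_iff₀' (by linarith)] at hℓ
    rw [le_sub_iff_add_le', ← le_sub_iff_add_le, div_le_iff₀ hlogN] at hgap
    nlinarith
  rw [← Real.rpow_mul (by linarith), ← Real.rpow_mul (by linarith),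
    Real.rpow_def_of_pos (by linarith), Real.rpow_def_of_pos (by linarith),
    ← Real.exp_log (show (0 : ℝ) < 4 by norm_num),
    ← Real.exp_add, Real.exp_le_exp]
  linarith

lemma tier_variance_ratio_le {τ N abar α₀ α₁ : ℝ} (hτ : τ ∈ Ioo 2 3) (hN : 1 ≤ N)
    (h₀ : α₀ ≤ abar) (h₁ : α₁ ≤ abar) :
    N * ((τ - 1) / (3 - τ) * (N ^ α₁) ^ (3 - τ)) /
        (N * (N ^ α₀) ^ (2 - τ) * ((τ - 1) / (τ - 2)) / 2) ^ 2
      ≤ (τ - 1) / (3 - τ) / ((τ - 1) / (τ - 2) / 2) ^ 2 * N ^ ((τ - 1) * abar - 1) := by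
  obtain ⟨hτ2, hτ3⟩ := hτ
  have hsplit : ∀ c E X Y : ℝ, N * (c * X) / (Y * E / 2) ^ 2 = c / (E / 2) ^ 2 * (N * X / Y ^ 2) :=
    fun _ _ _ _ => by ring
  have hexp : N * (N ^ α₁) ^ (3 - τ) / (N * (N ^ α₀) ^ (2 - τ)) ^ 2
      = N ^ ((3 - τ) * α₁ + 2 * (τ - 2) * α₀ - 1) := by
    obtain ⟨L, rfl⟩ : ∃ L, N = Real.exp L := ⟨Real.log N, (Real.exp_log (by linarith)).symm⟩
    simp only [← Real.exp_mul, ← Real.exp_nat_mul, ← Real.exp_add, ← Real.exp_sub]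
    congr 1
    push_cast
    ring
  rw [hsplit, hexp]
  refine mul_le_mul_of_nonneg_left (Real.rpow_le_rpow_of_exponent_le hN ?_)
    (div_nonneg (div_nonneg (by linarith) (by linarith)) (sq_nonneg _))
  nlinarith [mul_le_mul_of_nonneg_left h₁ (show 0 ≤ 3 - τ by linarith),
    mul_le_mul_of_nonneg_left h₀ (show 0 ≤ τ - 2 by linarith)]

lemma eventually_const_mul_rpow_le {C D p q : ℝ} (hD : 0 < D) (hpq : p < q) :
    ∀ᶠ x : ℝ in atTop, C * x ^ p ≤ D * x ^ q := by
  filter_upwards [(tendsto_rpow_atTop (sub_pos.2 hpq)).eventually_ge_atTop (C / D),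
    eventually_gt_atTop 0] with x hx hx0
  calc C * x ^ p ≤ D * x ^ (q - p) * x ^ p :=
        mul_le_mul_of_nonneg_right ((div_le_iff₀' hD).1 hx) (Real.rpow_nonneg hx0.le _)
    _ = D * x ^ q := by rw [mul_assoc, ← Real.rpow_add hx0, sub_add_cancel]

lemma eventually_tier_variance_ratio_le {τ abar : ℝ} (hτ : τ ∈ Ioo 2 3)
    (habar : (τ - 1) * abar < 1) :
    ∀ᶠ N : ℕ in atTop, ∀ α₀ α₁ : ℝ, α₀ ≤ abar → α₁ ≤ abar →
      N * ((τ - 1) / (3 - τ) * ((N : ℝ) ^ α₁) ^ (3 - τ)) /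
          (N * ((N : ℝ) ^ α₀) ^ (2 - τ) * ((τ - 1) / (τ - 2)) / 2) ^ 2
        ≤ 2 * ((τ - 1) / (τ - 2) / 2) ^ (-(τ - 1)) *
          (N : ℝ) ^ (-((1 - (τ - 1) * abar) * (τ - 2))) := by
  obtain ⟨hτ2, hτ3⟩ := hτ
  have hdecay := eventually_const_mul_rpow_le
    (C := (τ - 1) / (3 - τ) / ((τ - 1) / (τ - 2) / 2) ^ 2)
    (D := 2 * ((τ - 1) / (τ - 2) / 2) ^ (-(τ - 1)))
    (mul_pos two_pos <|
      Real.rpow_pos_of_pos (div_pos (div_pos (by linarith) (by linarith)) two_pos) _)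
    (show (τ - 1) * abar - 1 < -((1 - (τ - 1) * abar) * (τ - 2)) by nlinarith)
  filter_upwards [eventually_ge_atTop 1, tendsto_natCast_atTop_atTop.eventually hdecay]
    with N hN hdecayN α₀ α₁ h₀ h₁
  exact (tier_variance_ratio_le ⟨hτ2, hτ3⟩ (by exact_mod_cast hN) h₀ h₁).trans hdecayN

theorem tier_volume_general
    (τ : ℝ) (hτ : τ ∈ Set.Ioo (2 : ℝ) 3)
    (Ω : Type) [MeasurableSpace Ω] (μ : Measure Ω) [IsProbabilityMeasure μ]
    (Λ : (N : ℕ) → Fin N → Ω → ℝ)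
    (hΛ_meas : ∀ N i, Measurable (Λ N i))
    (hΛ_indep : ∀ N, iIndepFun (Λ N) μ)
    (hΛ_pareto : ∀ (N : ℕ) (i : Fin N) (x : ℝ), 1 ≤ x →
      μ {ω | x < Λ N i ω} = ENNReal.ofReal (x ^ (-(τ - 1))))
    (ℓ : ℕ → ℝ) (hℓ : IsAdmissibleEll ℓ)
    (abar : ℝ) (habar : 0 < abar ∧ abar < 1 / (τ - 1))
    (α₀ α₁ : ℕ → ℝ)
    (hα₀ : ∀ N, α₀ N ∈ Set.Ioo 0 abar) (hα₁ : ∀ N, α₁ N ∈ Set.Ioo 0 abar)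
    (hgap : ∀ N, α₀ N ≤ α₁ N - epsFun ℓ N) :
    ∀ᶠ N : ℕ in atTop,
      1 - 2 * ENNReal.ofReal ((((τ - 1) / (τ - 2)) / 2) ^ (-(τ - 1)) *
            (N : ℝ) ^ (-((1 - (τ - 1) * abar) * (τ - 2)))) ≤
        μ {ω |
          (∑ i, Set.indicator
              {x : ℝ | (N : ℝ) ^ α₀ N < x ∧ x ≤ (N : ℝ) ^ α₁ N} id (Λ N i ω)) /
              ((N : ℝ) ^ (1 - (τ - 2) * α₀ N) * ((τ - 1) / (τ - 2))) ∈
            Set.Ioo (1 / 5 : ℝ) 5} := by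
  obtain ⟨hτ2, hτ3⟩ := hτ
  have habar' : (τ - 1) * abar < 1 := by
    rw [lt_div_iff₀ (by linarith)] at habar; linarith [habar.2]
  filter_upwards [eventually_gt_atTop 1,
    hℓ.tendsto_atTop.eventually_ge_atTop (Real.log 4 / (τ - 2)),
    eventually_tier_variance_ratio_le ⟨hτ2, hτ3⟩ habar'] with N hN hℓN hratio
  have hN' : (1 : ℝ) < N := by exact_mod_cast hN
  have : Nonempty (Fin N) := ⟨⟨0, by omega⟩⟩
  have hα : α₀ N ≤ α₁ N := by
    have : 0 ≤ epsFun ℓ N :=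
      div_nonneg ((div_nonneg (Real.log_nonneg (by norm_num)) (by linarith)).trans hℓN)
        (Real.log_nonneg hN'.le)
    linarith [hgap N]
  rw [show 1 - (τ - 2) * α₀ N = 1 + α₀ N * (2 - τ) by ring, ← mul_rpow_rpow (by positivity)]
  have hconc := tierSum_concentration (Λ := Λ N) (hΛ_meas N) (hΛ_indep N)
    (fun i => map_eq_paretoMeasure_of_tail (hΛ_meas N i) (by linarith) (hΛ_pareto N i)) ⟨hτ2, hτ3⟩
    (Real.one_le_rpow hN'.le (hα₀ N).1.le) (Real.rpow_le_rpow_of_exponent_le hN'.le hα)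
    (four_mul_rpow_le_of_gap hτ2 hN' hℓN (hgap N))
  rw [Fintype.card_fin] at hconc
  refine le_trans ?_ hconc
  rw [← ENNReal.ofReal_ofNat 2, ← ENNReal.ofReal_mul zero_le_two, ← mul_assoc]
  gcongr
  exact hratio _ _ (hα₀ N).2.le (hα₁ N).2.le

/-- Lemma 3.2 of Norros–Reittu. For i.i.d. Pareto(τ) capacities
and `α_0(N) ≤ α_1(N) - ε(N)` in `(0, ᾱ)`, `ᾱ < 1/(τ-1)`, the aggregated capacity of the
tier `(N^{α_0}, N^{α_1}]` is, with probability at least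
`1 - 2 (E[Λ]/2)^{-(τ-1)} N^{-(1-(τ-1)ᾱ)(τ-2)}`, within a factor `(1/5, 5)` of
`N^{1-(τ-2)α_0} E[Λ]`, for all sufficiently large `N`. -/
theorem tier_volume
    (τ : ℝ) (hτ : τ ∈ Set.Ioo (2 : ℝ) 3)
    (Ω : Type) [MeasurableSpace Ω] (μ : Measure Ω) [IsProbabilityMeasure μ]
    (Λ : (N : ℕ) → Fin N → Ω → ℝ)
    (hΛ_meas : ∀ N i, Measurable (Λ N i))
    (hΛ_ge_one : ∀ N i ω, 1 ≤ Λ N i ω)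
    (hΛ_indep : ∀ N, iIndepFun (Λ N) μ)
    (hΛ_pareto : ∀ (N : ℕ) (i : Fin N) (x : ℝ), 1 ≤ x →
      μ {ω | x < Λ N i ω} = ENNReal.ofReal (x ^ (-(τ - 1))))
    (ℓ : ℕ → ℝ) (hℓ : IsAdmissibleEll ℓ)
    (abar : ℝ) (habar : 0 < abar ∧ abar < 1 / (τ - 1))
    (α₀ α₁ : ℕ → ℝ)
    (hα₀ : ∀ N, α₀ N ∈ Set.Ioo 0 abar) (hα₁ : ∀ N, α₁ N ∈ Set.Ioo 0 abar)
    (hgap : ∀ N, α₀ N ≤ α₁ N - epsFun ℓ N) :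
    ∀ᶠ N : ℕ in atTop,
      1 - 2 * ENNReal.ofReal ((((τ - 1) / (τ - 2)) / 2) ^ (-(τ - 1)) *
            (N : ℝ) ^ (-((1 - (τ - 1) * abar) * (τ - 2)))) ≤
        μ {ω |
          (∑ i, Set.indicator
              {x : ℝ | (N : ℝ) ^ α₀ N < x ∧ x ≤ (N : ℝ) ^ α₁ N} id (Λ N i ω)) /
              ((N : ℝ) ^ (1 - (τ - 2) * α₀ N) * ((τ - 1) / (τ - 2))) ∈
            Set.Ioo (1 / 5 : ℝ) 5} :=
  tier_volume_general τ hτ Ω μ Λ hΛ_meas hΛ_indep hΛ_pareto ℓ hℓ abar habar α₀ α₁ hα₀ hα₁ hgap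
end
end

section
/- For any fixed b > 1, the ratio ( Σ_{i=1}^N Λ_i·1{Λ_i > N^{b·ε(N)}} ) / ( Σ_{i=1}^N Λ_i·1{Λ_i > N^{ε(N)}} ) converges to 0 in probability as N → ∞. -/
open MeasureTheory ProbabilityTheory Filter Set

noncomputable section

/-! Put `a = N^ε = e^ℓ` and `A = N^{bε} = e^{bℓ}`. A capacity exceeds `a` with probability
`p = a^{1-τ}`, and `Np = exp (log N - (τ-1)ℓ) → ∞` since `ℓ = o(log N)`; by Chebyshev, with high
probability at least `Np/2` capacities exceed `a`, so the denominator is at least `aNp/2`. The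
numerator has mean `N (τ-1)/(τ-2) A^{2-τ}`, so by Markov it exceeds `δaNp/2` with probability
`O((a/A)^{τ-2}) = O(e^{-(b-1)(τ-2)ℓ})`, which tends to `0` because `ℓ → ∞`. -/

lemma lintegral_indicator_Ioi_of_pareto_tail {Ω : Type*} [MeasurableSpace Ω] {μ : Measure Ω}
    {X : Ω → ℝ} (hX : Measurable X) {α A : ℝ} (hα : 1 < α) (hA : 0 < A)
    (htail : ∀ x, A ≤ x → μ {ω | x < X ω} = ENNReal.ofReal (x ^ (-α))) :
    ∫⁻ ω, ENNReal.ofReal ((Ioi A).indicator id (X ω)) ∂μ =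
      ENNReal.ofReal (α / (α - 1) * A ^ (1 - α)) := by
  have hY : Measurable fun ω => (Ioi A).indicator id (X ω) :=
    (measurable_id.indicator measurableSet_Ioi).comp hX
  have hY_nonneg : ∀ ω, 0 ≤ (Ioi A).indicator id (X ω) :=
    fun ω => indicator_nonneg (fun x (hx : A < x) => hA.le.trans hx.le) _
  have below : ∀ t ∈ Ioc 0 A, {ω | t < (Ioi A).indicator id (X ω)} = {ω | A < X ω} := by
    rintro t ⟨ht0, htA⟩
    ext ω
    by_cases h : A < X ω
    · simp [h, htA.trans_lt h]
    · simp [h, ht0.not_gt]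
  have above : ∀ t ∈ Ioi A, {ω | t < (Ioi A).indicator id (X ω)} = {ω | t < X ω} := by
    intro t (htA : A < t)
    ext ω
    by_cases h : A < X ω
    · simp [indicator_of_mem (show X ω ∈ Ioi A from h)]
    · simp only [mem_ofPred_eq, indicator_of_notMem (show X ω ∉ Ioi A from h)]
      exact iff_of_false (by linarith) (by linarith [not_lt.1 h])
  have h_integrable : IntegrableOn (fun t : ℝ => t ^ (-α)) (Ioi A) :=
    integrableOn_Ioi_rpow_of_lt (by linarith) hA
  rw [lintegral_eq_lintegral_meas_lt μ (ae_of_all _ hY_nonneg) hY.aemeasurable,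
    ← Ioc_union_Ioi_eq_Ioi hA.le, lintegral_union measurableSet_Ioi Ioc_disjoint_Ioi_same,
    setLIntegral_congr_fun measurableSet_Ioc fun t ht => by rw [below t ht, htail A le_rfl],
    setLIntegral_congr_fun measurableSet_Ioi fun t (ht : A < t) => by
      rw [above t ht, htail t ht.le],
    setLIntegral_const, Real.volume_Ioc, sub_zero,
    ← ofReal_integral_eq_lintegral_ofReal h_integrable
      ((ae_restrict_iff' measurableSet_Ioi).2 (ae_of_all _ fun t (ht : A < t) =>
        Real.rpow_nonneg (hA.trans ht).le _)),
    integral_Ioi_rpow_of_lt (by linarith) hA,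
    ← ENNReal.ofReal_mul (by positivity), ← ENNReal.ofReal_add (by positivity) ?_]
  · have h1 : 1 - α ≠ 0 := by linarith
    have h2 : α - 1 ≠ 0 := by linarith
    congr 1
    rw [show -α + 1 = 1 - α by ring, ← Real.rpow_add_one hA.ne', show -α + 1 = 1 - α by ring]
    field_simp
    ring
  · exact div_nonneg_of_nonpos (neg_nonpos.2 (by positivity)) (by linarith)

lemma mul_sum_indicator_one_le_sum_indicator_id {ι : Type*} (s : Finset ι) (a : ℝ) (x : ι → ℝ) :
    a * ∑ i ∈ s, (Ioi a).indicator 1 (x i) ≤ ∑ i ∈ s, (Ioi a).indicator id (x i) := by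
  rw [Finset.mul_sum]
  refine Finset.sum_le_sum fun i _ => ?_
  by_cases h : x i ∈ Ioi a
  · simpa [h] using h.le
  · simp [h]

lemma measure_sum_indicator_ge_le {Ω ι : Type*} [MeasurableSpace Ω] {μ : Measure Ω} [Fintype ι]
    {X : ι → Ω → ℝ} (hX : ∀ i, Measurable (X i)) {α A c : ℝ} (hα : 1 < α) (hA : 0 < A)
    (hc : 0 < c) (htail : ∀ i x, A ≤ x → μ {ω | x < X i ω} = ENNReal.ofReal (x ^ (-α))) :
    μ {ω | c ≤ ∑ i, (Ioi A).indicator id (X i ω)} ≤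
      ENNReal.ofReal (Fintype.card ι * (α / (α - 1) * A ^ (1 - α)) / c) := by
  have hY : ∀ i, Measurable fun ω => (Ioi A).indicator id (X i ω) := fun i =>
    (measurable_id.indicator measurableSet_Ioi).comp (hX i)
  have hY_nonneg : ∀ i ω, 0 ≤ (Ioi A).indicator id (X i ω) := fun i ω =>
    indicator_nonneg (fun x (hx : A < x) => hA.le.trans hx.le) _
  have hmean : ∫⁻ ω, ENNReal.ofReal (∑ i, (Ioi A).indicator id (X i ω)) ∂μ =
      Fintype.card ι * ENNReal.ofReal (α / (α - 1) * A ^ (1 - α)) := by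
    simp_rw [ENNReal.ofReal_sum_of_nonneg fun i _ => hY_nonneg i _]
    rw [lintegral_finsetSum _ fun i _ => (hY i).ennreal_ofReal]
    simp [lintegral_indicator_Ioi_of_pareto_tail (hX _) hα hA (htail _)]
  calc μ {ω | c ≤ ∑ i, (Ioi A).indicator id (X i ω)}
      = μ {ω | ENNReal.ofReal c ≤ ENNReal.ofReal (∑ i, (Ioi A).indicator id (X i ω))} := by
        simp_rw [ENNReal.ofReal_le_ofReal_iff (Finset.sum_nonneg fun i _ => hY_nonneg i _)]
    _ ≤ (∫⁻ ω, ENNReal.ofReal (∑ i, (Ioi A).indicator id (X i ω)) ∂μ) / ENNReal.ofReal c :=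
        meas_ge_le_lintegral_div
          (Finset.measurable_sum _ fun i _ => hY i).ennreal_ofReal.aemeasurable
          (by simpa using hc) ENNReal.ofReal_ne_top
    _ = ENNReal.ofReal (Fintype.card ι * (α / (α - 1) * A ^ (1 - α)) / c) := by
        rw [hmean, ENNReal.ofReal_div_of_pos hc, ENNReal.ofReal_mul (Nat.cast_nonneg _),
          ENNReal.ofReal_natCast]

lemma measure_sum_indicator_lt_half_le {Ω ι : Type*} [MeasurableSpace Ω] {μ : Measure Ω}
    [IsProbabilityMeasure μ] [Fintype ι] [Nonempty ι] {X : ι → Ω → ℝ}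
    (hX : ∀ i, Measurable (X i)) (hindep : Pairwise fun i j => IndepFun (X i) (X j) μ)
    {a p : ℝ} (hp : 0 < p) (htail : ∀ i, μ {ω | a < X i ω} = ENNReal.ofReal p) :
    μ {ω | ∑ i, (Ioi a).indicator 1 (X i ω) < Fintype.card ι * p / 2} ≤
      ENNReal.ofReal (4 / (Fintype.card ι * p)) := by
  set n : ℝ := (Fintype.card ι : ℝ)
  have hnp : 0 < n * p := mul_pos (Nat.cast_pos.2 Fintype.card_pos) hp
  set χ : ι → Ω → ℝ := fun i ω => (Ioi a).indicator 1 (X i ω)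
  have hf : Measurable ((Ioi a).indicator (1 : ℝ → ℝ)) :=
    measurable_const.indicator measurableSet_Ioi
  have hχ_mem : ∀ i ω, χ i ω ∈ Icc (0 : ℝ) 1 := fun i ω => by
    by_cases h : X i ω ∈ Ioi a <;> simp [χ, h]
  have hχ_memLp : ∀ i, MemLp (χ i) 2 μ := fun i =>
    memLp_of_bounded (ae_of_all _ (hχ_mem i)) (hf.comp (hX i)).aestronglyMeasurable 2
  have hχ_mean : ∀ i, μ[χ i] = p := fun i => by
    simp_rw [χ, ← indicator_comp_right, Pi.one_comp]
    rw [integral_indicator_one (hX i measurableSet_Ioi), measureReal_def]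
    exact (congrArg ENNReal.toReal (htail i)).trans (ENNReal.toReal_ofReal hp.le)
  have hχ_var : ∀ i, variance (χ i) μ ≤ p := fun i => by
    have h := variance_le_sub_mul_sub (ae_of_all μ (hχ_mem i)) (hf.comp (hX i)).aemeasurable
    rw [hχ_mean] at h
    nlinarith
  have hS_mean : μ[∑ i, χ i] = n * p := by
    simp_rw [Finset.sum_apply]
    rw [integral_finsetSum _ fun i _ => (hχ_memLp i).integrable one_le_two]
    simp [hχ_mean, n]
  have hS_var : variance (∑ i, χ i) μ ≤ n * p := by
    rw [IndepFun.variance_sum (fun i _ => hχ_memLp i)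
      fun i _ j _ hij => (hindep hij).comp hf hf]
    simpa [n] using Finset.sum_le_sum fun i (_ : i ∈ Finset.univ) => hχ_var i
  have hsub : {ω | ∑ i, χ i ω < n * p / 2} ⊆
      {ω | n * p / 2 ≤ |(∑ i, χ i) ω - μ[∑ i, χ i]|} := fun ω hω => by
    replace hω : ∑ i, χ i ω < n * p / 2 := hω
    rw [mem_ofPred_eq, hS_mean, Finset.sum_apply, abs_sub_comm]
    exact (by linarith : n * p / 2 ≤ n * p - ∑ i, χ i ω).trans (le_abs_self _)
  calc μ {ω | ∑ i, χ i ω < n * p / 2}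
      ≤ ENNReal.ofReal (variance (∑ i, χ i) μ / (n * p / 2) ^ 2) :=
        (measure_mono hsub).trans
          (meas_ge_le_variance_div_sq (memLp_finsetSum' _ fun i _ => hχ_memLp i) (by positivity))
    _ ≤ ENNReal.ofReal (4 / (n * p)) := by
        refine ENNReal.ofReal_le_ofReal ?_
        rw [div_le_div_iff₀ (by positivity) hnp]
        nlinarith [variance_nonneg (∑ i, χ i) μ]

lemma measure_ratio_sum_indicator_ge_le {Ω ι : Type*} [MeasurableSpace Ω] {μ : Measure Ω}
    [IsProbabilityMeasure μ] [Fintype ι] [Nonempty ι] {X : ι → Ω → ℝ}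
    (hX : ∀ i, Measurable (X i)) (hindep : Pairwise fun i j => IndepFun (X i) (X j) μ)
    {α a A δ : ℝ} (hα : 1 < α) (ha : 1 ≤ a) (hA : 1 ≤ A) (hδ : 0 < δ)
    (htail : ∀ i x, 1 ≤ x → μ {ω | x < X i ω} = ENNReal.ofReal (x ^ (-α))) :
    μ {ω | δ ≤ (∑ i, (Ioi A).indicator id (X i ω)) / ∑ i, (Ioi a).indicator id (X i ω)} ≤
      ENNReal.ofReal (4 * a ^ α / Fintype.card ι) +
        ENNReal.ofReal (2 * α / ((α - 1) * δ) * (a / A) ^ (α - 1)) := by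
  set n : ℝ := (Fintype.card ι : ℝ) with hn_def
  have hn : 0 < n := Nat.cast_pos.2 Fintype.card_pos
  have ha0 : 0 < a := one_pos.trans_le ha
  have hA0 : 0 < A := one_pos.trans_le hA
  set p := a ^ (-α)
  have hp : 0 < p := Real.rpow_pos_of_pos ha0 _
  set c := δ * (a * (n * p / 2)) with hc_def
  have hsub : {ω | δ ≤ (∑ i, (Ioi A).indicator id (X i ω)) / ∑ i, (Ioi a).indicator id (X i ω)} ⊆
      {ω | ∑ i, (Ioi a).indicator 1 (X i ω) < n * p / 2} ∪
        {ω | c ≤ ∑ i, (Ioi A).indicator id (X i ω)} := fun ω hω => by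
    replace hω : δ ≤ (∑ i, (Ioi A).indicator id (X i ω)) / ∑ i, (Ioi a).indicator id (X i ω) := hω
    refine or_iff_not_imp_left.2 fun hcount => ?_
    have hlow : a * (n * p / 2) ≤ ∑ i, (Ioi a).indicator id (X i ω) :=
      (mul_le_mul_of_nonneg_left (not_lt.1 hcount) ha0.le).trans
        (mul_sum_indicator_one_le_sum_indicator_id _ a _)
    have hpos : 0 < ∑ i, (Ioi a).indicator id (X i ω) := lt_of_lt_of_le (by positivity) hlow
    exact (mul_le_mul_of_nonneg_left hlow hδ.le).trans ((le_div_iff₀ hpos).1 hω)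
  calc _ ≤ _ := measure_mono hsub
    _ ≤ _ := measure_union_le _ _
    _ ≤ _ := add_le_add
        (measure_sum_indicator_lt_half_le hX hindep hp fun i => by rw [htail i a ha])
        (measure_sum_indicator_ge_le hX hα hA0 (by positivity)
          fun i x hx => htail i x (hA.trans hx))
    _ = _ := by
        have hα1 : α - 1 ≠ 0 := by linarith
        have ha_pow : a ^ α = a ^ (α - 1) * a := by
          rw [← Real.rpow_add_one ha0.ne', sub_add_cancel]
        have hp_eq : p = (a ^ (α - 1) * a)⁻¹ := by
          rw [← ha_pow]; exact Real.rpow_neg ha0.le α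
        rw [← hn_def, hc_def, hp_eq, ha_pow, Real.div_rpow ha0.le hA0.le,
          show 1 - α = -(α - 1) by ring, Real.rpow_neg hA0.le]
        congr 2 <;> field_simp

lemma natCast_rpow_mul_epsFun (ℓ : ℕ → ℝ) {N : ℕ} (hN : 2 ≤ N) (c : ℝ) :
    (N : ℝ) ^ (c * epsFun ℓ N) = Real.exp (c * ℓ N) := by
  have hlog : Real.log N ≠ 0 := (Real.log_pos (by exact_mod_cast hN)).ne'
  rw [Real.rpow_def_of_pos (by positivity), epsFun]
  field_simp

lemma natCast_rpow_epsFun (ℓ : ℕ → ℝ) {N : ℕ} (hN : 2 ≤ N) :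
    (N : ℝ) ^ epsFun ℓ N = Real.exp (ℓ N) := by
  simpa using natCast_rpow_mul_epsFun ℓ hN 1

lemma tendsto_log_log_log_div_log :
    Tendsto (fun x : ℝ => Real.log (Real.log (Real.log x)) / Real.log x) atTop (nhds 0) := by
  have h : (fun y => Real.log (Real.log y)) =o[atTop] id :=
    (Real.isLittleO_log_id_atTop.comp_tendsto Real.tendsto_log_atTop).trans
      Real.isLittleO_log_id_atTop
  exact (h.comp_tendsto Real.tendsto_log_atTop).tendsto_div_nhds_zero

namespace IsAdmissibleEll

lemma tendsto_atTop_s8 {ℓ : ℕ → ℝ} (hℓ : IsAdmissibleEll ℓ) : Tendsto ℓ atTop atTop := by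
  have hlog : Tendsto (fun N : ℕ => Real.log (Real.log (Real.log (Real.log N)))) atTop atTop :=
    Real.tendsto_log_atTop.comp <| Real.tendsto_log_atTop.comp <| Real.tendsto_log_atTop.comp <|
      Real.tendsto_log_atTop.comp tendsto_natCast_atTop_atTop
  refine (hℓ.2.2.2.atTop_mul_atTop₀ hlog).congr' ?_
  filter_upwards [hlog.eventually_ne_atTop 0] with N hN
  exact div_mul_cancel₀ _ hN

lemma tendsto_div_log {ℓ : ℕ → ℝ} (hℓ : IsAdmissibleEll ℓ) :
    Tendsto (fun N : ℕ => ℓ N / Real.log N) atTop (nhds 0) := by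
  have hlog : Tendsto (fun N : ℕ => Real.log (Real.log (Real.log N))) atTop atTop :=
    Real.tendsto_log_atTop.comp <| Real.tendsto_log_atTop.comp <|
      Real.tendsto_log_atTop.comp tendsto_natCast_atTop_atTop
  have h := hℓ.2.2.1.mul (tendsto_log_log_log_div_log.comp tendsto_natCast_atTop_atTop)
  rw [zero_mul] at h
  refine h.congr' ?_
  filter_upwards [hlog.eventually_ne_atTop 0] with N hN
  exact div_mul_div_cancel₀ hN

lemma tendsto_exp_mul_div_natCast {ℓ : ℕ → ℝ} (hℓ : IsAdmissibleEll ℓ) (c : ℝ) :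
    Tendsto (fun N : ℕ => Real.exp (c * ℓ N) / N) atTop (nhds 0) := by
  have hlog : Tendsto (fun N : ℕ => Real.log N) atTop atTop :=
    Real.tendsto_log_atTop.comp tendsto_natCast_atTop_atTop
  have h : Tendsto (fun N : ℕ => Real.log N * (c * (ℓ N / Real.log N) - 1)) atTop atBot :=
    hlog.atTop_mul_neg (C := -1) (by norm_num)
      (by simpa using (hℓ.tendsto_div_log.const_mul c).sub_const 1)
  refine (Real.tendsto_exp_atBot.comp h).congr' ?_
  filter_upwards [eventually_ge_atTop 2] with N hN
  have hlog_ne : Real.log N ≠ 0 := (Real.log_pos (by exact_mod_cast hN)).ne'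
  rw [Function.comp_apply, mul_sub, mul_one, Real.exp_sub, Real.exp_log (by positivity)]
  field_simp

end IsAdmissibleEll

theorem low_tier_dominates_general
    (τ : ℝ) (hτ : τ ∈ Set.Ioo (2 : ℝ) 3)
    (Ω : Type) [MeasurableSpace Ω] (μ : Measure Ω) [IsProbabilityMeasure μ]
    (Λ : (N : ℕ) → Fin N → Ω → ℝ)
    (hΛ_meas : ∀ N i, Measurable (Λ N i))
    (hΛ_indep : ∀ N, iIndepFun (Λ N) μ)
    (hΛ_pareto : ∀ (N : ℕ) (i : Fin N) (x : ℝ), 1 ≤ x →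
      μ {ω | x < Λ N i ω} = ENNReal.ofReal (x ^ (-(τ - 1))))
    (ℓ : ℕ → ℝ) (hℓ : IsAdmissibleEll ℓ)
    (b : ℝ) (hb : 1 < b) :
    ∀ δ : ℝ, 0 < δ →
      Tendsto (fun N : ℕ =>
          μ {ω | δ ≤
            (∑ i, Set.indicator {x : ℝ | (N : ℝ) ^ (b * epsFun ℓ N) < x} id (Λ N i ω)) /
              (∑ i, Set.indicator {x : ℝ | (N : ℝ) ^ epsFun ℓ N < x} id (Λ N i ω))})
        atTop (nhds 0) := by
  intro δ hδ
  have hα : 1 < τ - 1 := by linarith [hτ.1]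
  have hbound : ∀ᶠ N : ℕ in atTop, μ {ω | δ ≤
      (∑ i, Set.indicator {x : ℝ | (N : ℝ) ^ (b * epsFun ℓ N) < x} id (Λ N i ω)) /
        (∑ i, Set.indicator {x : ℝ | (N : ℝ) ^ epsFun ℓ N < x} id (Λ N i ω))} ≤
      ENNReal.ofReal (4 * Real.exp ((τ - 1) * ℓ N) / N) +
        ENNReal.ofReal (2 * (τ - 1) / ((τ - 1 - 1) * δ) *
          Real.exp ((1 - b) * (τ - 1 - 1) * ℓ N)) := by
    filter_upwards [eventually_ge_atTop 2, hℓ.tendsto_atTop_s8.eventually_ge_atTop 0] with N hN hℓN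
    have : Nonempty (Fin N) := ⟨⟨0, by omega⟩⟩
    refine (measure_ratio_sum_indicator_ge_le (hΛ_meas N)
      (fun i j hij => (hΛ_indep N).indepFun hij) hα ?_ ?_ hδ (hΛ_pareto N)).trans_eq ?_
    · rw [natCast_rpow_epsFun ℓ hN]
      exact Real.one_le_exp hℓN
    · rw [natCast_rpow_mul_epsFun ℓ hN]
      exact Real.one_le_exp (mul_nonneg (by linarith) hℓN)
    · rw [natCast_rpow_epsFun ℓ hN, natCast_rpow_mul_epsFun ℓ hN, Fintype.card_fin,
        ← Real.exp_sub, ← Real.exp_mul, ← Real.exp_mul]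
      ring_nf
  refine tendsto_of_tendsto_of_tendsto_of_le_of_le' tendsto_const_nhds ?_
    (Eventually.of_forall fun N => zero_le) hbound
  rw [← add_zero (0 : ENNReal), ← ENNReal.ofReal_zero]
  refine (ENNReal.tendsto_ofReal ?_).add (ENNReal.tendsto_ofReal ?_)
  · simpa [mul_div_assoc] using (hℓ.tendsto_exp_mul_div_natCast (τ - 1)).const_mul 4
  · have hneg : (1 - b) * (τ - 1 - 1) < 0 := mul_neg_of_neg_of_pos (by linarith) (by linarith)
    simpa using (Real.tendsto_exp_atBot.comp
      (hℓ.tendsto_atTop_s8.const_mul_atTop_of_neg hneg)).const_mul (2 * (τ - 1) / ((τ - 1 - 1) * δ))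

/-- Lemma 3.3 of Norros–Reittu. For any fixed `b > 1`, the
aggregated capacity above level `N^{bε(N)}` is negligible compared with the
aggregated capacity above level `N^{ε(N)}`: their ratio tends to `0` in probability. -/
theorem low_tier_dominates
    (τ : ℝ) (hτ : τ ∈ Set.Ioo (2 : ℝ) 3)
    (Ω : Type) [MeasurableSpace Ω] (μ : Measure Ω) [IsProbabilityMeasure μ]
    (Λ : (N : ℕ) → Fin N → Ω → ℝ)
    (hΛ_meas : ∀ N i, Measurable (Λ N i))
    (hΛ_ge_one : ∀ N i ω, 1 ≤ Λ N i ω)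
    (hΛ_indep : ∀ N, iIndepFun (Λ N) μ)
    (hΛ_pareto : ∀ (N : ℕ) (i : Fin N) (x : ℝ), 1 ≤ x →
      μ {ω | x < Λ N i ω} = ENNReal.ofReal (x ^ (-(τ - 1))))
    (ℓ : ℕ → ℝ) (hℓ : IsAdmissibleEll ℓ)
    (b : ℝ) (hb : 1 < b) :
    ∀ δ : ℝ, 0 < δ →
      Tendsto (fun N : ℕ =>
          μ {ω | δ ≤
            (∑ i, Set.indicator {x : ℝ | (N : ℝ) ^ (b * epsFun ℓ N) < x} id (Λ N i ω)) /
              (∑ i, Set.indicator {x : ℝ | (N : ℝ) ^ epsFun ℓ N < x} id (Λ N i ω))})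
        atTop (nhds 0) :=
  low_tier_dominates_general τ hτ Ω μ Λ hΛ_meas hΛ_indep hΛ_pareto ℓ hℓ b hb
end
end

section
/- Let α > 0, let N_α be a Binomial(N, N^{−(τ−1)α}) random variable (assuming N^{−(τ−1)α} ≤ 1), and let Λ̃_1, Λ̃_2, … be i.i.d. copies of Λ independent of N_α. Then Σ_{i=1}^N Λ_i·1{Λ_i > N^α} has the same distribution as N^α · Σ_{k=1}^{N_α} Λ̃_k. -/
open MeasureTheory ProbabilityTheory Set
open scoped ENNReal

/-!
Compare characteristic functions, writing `c = N^α`, `p = c^{-(τ-1)} = P(Λ > c)` and `φ` for the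
characteristic function of `Λ`. The Pareto law is scale invariant: conditioned on `Λ > c` it is
the law of `cΛ`. Hence `Λ 1{Λ > c}` has characteristic function `1 - p + p φ(c t)`, and by
independence the left side has `(1 - p + p φ(c t))^N`. Conditioning on `N_α`, the right side has
`E[φ(c t)^{N_α}]`, the binomial generating function at `φ(c t)`, which is the same.
-/

theorem MeasureTheory.Measure.ext_of_Ioi {α : Type*} [TopologicalSpace α] {m : MeasurableSpace α}
    [SecondCountableTopology α] [LinearOrder α] [OrderTopology α] [BorelSpace α]
    (μ ν : Measure α) [IsFiniteMeasure μ] (huniv : μ univ = ν univ)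
    (h : ∀ a, μ (Ioi a) = ν (Ioi a)) : μ = ν := by
  have : IsFiniteMeasure ν := ⟨huniv ▸ measure_lt_top μ univ⟩
  refine Measure.ext_of_Iic μ ν fun a => ?_
  rw [← compl_Ioi, measure_compl measurableSet_Ioi (measure_ne_top _ _),
    measure_compl measurableSet_Ioi (measure_ne_top _ _), huniv, h]

def IsParetoLaw (ν : Measure ℝ) (a : ℝ) : Prop :=
  ∀ x, 1 ≤ x → ν (Ioi x) = ENNReal.ofReal (x ^ (-a))

lemma isParetoLaw_map {Ω : Type*} [MeasurableSpace Ω] {μ : Measure Ω} {X : Ω → ℝ}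
    (hX : Measurable X) {a : ℝ}
    (h : ∀ x : ℝ, 1 ≤ x → μ {ω | x < X ω} = ENNReal.ofReal (x ^ (-a))) :
    IsParetoLaw (μ.map X) a := fun x hx => by
  rw [Measure.map_apply hX measurableSet_Ioi]
  exact h x hx

namespace IsParetoLaw

variable {ν : Measure ℝ} [IsProbabilityMeasure ν] {a : ℝ}

lemma measure_Ioi (hν : IsParetoLaw ν a) (x : ℝ) :
    ν (Ioi x) = ENNReal.ofReal (max 1 x ^ (-a)) := by
  rcases le_total 1 x with hx | hx
  · rw [max_eq_right hx, hν x hx]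
  · rw [max_eq_left hx, Real.one_rpow, ENNReal.ofReal_one]
    refine le_antisymm prob_le_one ?_
    calc (1 : ℝ≥0∞) = ν (Ioi 1) := by rw [hν 1 le_rfl, Real.one_rpow, ENNReal.ofReal_one]
      _ ≤ ν (Ioi x) := measure_mono (Ioi_subset_Ioi hx)

lemma ext {ν' : Measure ℝ} [IsProbabilityMeasure ν']
    (hν : IsParetoLaw ν a) (hν' : IsParetoLaw ν' a) : ν = ν' :=
  Measure.ext_of_Ioi ν ν' (by simp) fun x => by rw [hν.measure_Ioi, hν'.measure_Ioi]

lemma restrict_Ioi (hν : IsParetoLaw ν a) {c : ℝ} (hc : 1 ≤ c) :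
    ν.restrict (Ioi c) = ENNReal.ofReal (c ^ (-a)) • ν.map (c * ·) := by
  have hc0 : 0 < c := zero_lt_one.trans_le hc
  have := Measure.isProbabilityMeasure_map (μ := ν) (measurable_const_mul c).aemeasurable
  refine Measure.ext_of_Ioi _ _ ?_ fun x => ?_
  · rw [Measure.restrict_apply_univ, Measure.smul_apply, measure_univ, smul_eq_mul, mul_one,
      hν c hc]
  · have hpre : (c * ·) ⁻¹' Ioi x = Ioi (x / c) := by
      ext y
      simp [div_lt_iff₀' hc0]
    rw [Measure.restrict_apply measurableSet_Ioi, Ioi_inter_Ioi, Measure.smul_apply,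
      Measure.map_apply (measurable_const_mul c) measurableSet_Ioi, hpre, smul_eq_mul,
      hν.measure_Ioi, hν.measure_Ioi, ← ENNReal.ofReal_mul (by positivity),
      ← Real.mul_rpow hc0.le (by positivity), mul_max_of_nonneg _ _ hc0.le, mul_one,
      mul_div_cancel₀ _ hc0.ne', max_comm x c,
      max_eq_right (hc.trans (le_max_left c x))]

lemma charFun_map_indicator_Ioi (hν : IsParetoLaw ν a) {c : ℝ} (hc : 1 ≤ c) (t : ℝ) :
    charFun (ν.map ((Ioi c).indicator id)) t =
      1 - (c ^ (-a) : ℝ) + (c ^ (-a) : ℝ) * charFun ν (c * t) := by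
  have hr : ν.real (Ioi c) = c ^ (-a) := by
    rw [measureReal_def, hν c hc, ENNReal.toReal_ofReal (by positivity)]
  have hm : Measurable ((Ioi c).indicator id) := measurable_id.indicator measurableSet_Ioi
  have hint :
      Integrable (fun x : ℝ => Complex.exp (t * (Ioi c).indicator id x * Complex.I)) ν := by
    refine Integrable.of_bound (by fun_prop) 1 (ae_of_all _ fun x => ?_)
    rw [← Complex.ofReal_mul, Complex.norm_exp_ofReal_mul_I]
  rw [charFun_apply_real, integral_map hm.aemeasurable (by fun_prop),
    ← integral_add_compl (measurableSet_Ioi (a := c)) hint, add_comm]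
  congr 1
  · rw [setIntegral_congr_fun measurableSet_Ioi.compl (g := fun _ => 1) fun x hx => by
      simp [Set.indicator_of_notMem hx], setIntegral_const, measureReal_compl measurableSet_Ioi,
      hr]
    simp
  · rw [setIntegral_congr_fun measurableSet_Ioi
        (g := fun x : ℝ => Complex.exp (t * x * Complex.I)) fun x hx => by
          simp [Set.indicator_of_mem hx],
      hν.restrict_Ioi hc, integral_smul_measure,
      integral_map (measurable_const_mul c).aemeasurable (by fun_prop), charFun_apply_real,
      ENNReal.toReal_ofReal (by positivity)]
    simp [mul_assoc, mul_left_comm, Complex.real_smul]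

lemma charFun_map_sum_indicator_Ioi (hν : IsParetoLaw ν a) {c : ℝ} (hc : 1 ≤ c)
    {Ω ι : Type*} [MeasurableSpace Ω] {μ : Measure Ω} [Fintype ι] {Y : ι → Ω → ℝ}
    (hY : ∀ i, Measurable (Y i)) (hYi : iIndepFun Y μ) (hYν : ∀ i, μ.map (Y i) = ν) (t : ℝ) :
    charFun (μ.map fun ω => ∑ i, (Ioi c).indicator id (Y i ω)) t =
      (1 - (c ^ (-a) : ℝ) + (c ^ (-a) : ℝ) * charFun ν (c * t)) ^ Fintype.card ι := by
  have htrunc : Measurable ((Ioi c).indicator id) := measurable_id.indicator measurableSet_Ioi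
  refine (congrFun ((hYi.comp _ fun _ => htrunc).charFun_map_fun_sum_eq_prod
    fun i => (htrunc.comp (hY i)).aemeasurable) t).trans ?_
  simp_rw [Finset.prod_apply, ← Measure.map_map htrunc (hY _), hYν,
    hν.charFun_map_indicator_Ioi hc, Finset.prod_const, Finset.card_univ]

end IsParetoLaw

section CompoundSum

variable {Ω : Type*} [MeasurableSpace Ω] {μ : Measure Ω} {X : ℕ → Ω → ℝ} {ν : Measure ℝ}

lemma measurable_sum_range_random (hX : ∀ k, Measurable (X k)) {M : Ω → ℕ}
    (hM : Measurable M) : Measurable fun ω => ∑ k ∈ Finset.range (M ω), X k ω :=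
  (measurable_from_prod_countable_right
      (f := fun p : ℕ × Ω => ∑ k ∈ Finset.range p.1, X k p.2) fun n =>
    Finset.measurable_sum (Finset.range n) fun k _ => hX k).comp (hM.prodMk measurable_id)

lemma charFun_map_sum_range (hX : ∀ k, Measurable (X k)) (hXi : iIndepFun X μ)
    (hν : ∀ k, μ.map (X k) = ν) (n : ℕ) (t : ℝ) :
    charFun (μ.map fun ω => ∑ k ∈ Finset.range n, X k ω) t = charFun ν t ^ n := by
  rw [(hXi.restrict _).charFun_map_fun_finsetSum_eq_prod fun k _ => (hX k).aemeasurable]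
  simp [hν]

lemma charFun_map_sum_range_of_indepFun [IsProbabilityMeasure μ]
    (hX : ∀ k, Measurable (X k)) (hXi : iIndepFun X μ) (hν : ∀ k, μ.map (X k) = ν)
    {M : Ω → ℕ} (hM : Measurable M) (hMX : IndepFun M (fun ω k => X k ω) μ) (t : ℝ) :
    charFun (μ.map fun ω => ∑ k ∈ Finset.range (M ω), X k ω) t =
      ∑' n, μ.real (M ⁻¹' {n}) * charFun ν t ^ n := by
  have : IsProbabilityMeasure ν := hν 0 ▸ Measure.isProbabilityMeasure_map (hX 0).aemeasurable
  set S : ℕ × (ℕ → ℝ) → ℝ := fun p => ∑ k ∈ Finset.range p.1, p.2 k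
  have hS : Measurable S := measurable_from_prod_countable_right fun n =>
    Finset.measurable_sum (Finset.range n) fun k _ => measurable_pi_apply k
  have hseq : Measurable fun ω k => X k ω := measurable_pi_lambda _ hX
  have hlaw : μ.map (fun ω => ∑ k ∈ Finset.range (M ω), X k ω) =
      ((μ.map M).prod (μ.map fun ω k => X k ω)).map S := by
    rw [← (indepFun_iff_map_prod_eq_prod_map_map hM.aemeasurable hseq.aemeasurable).1 hMX,
      Measure.map_map hS (hM.prodMk hseq)]
    rfl
  have hg : Measurable fun p => Complex.exp (t * S p * Complex.I) :=
    Complex.measurable_exp.comp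
      ((measurable_const.mul (Complex.measurable_ofReal.comp hS)).mul measurable_const)
  have hinner : ∀ n, ∫ x, Complex.exp (t * S (n, x) * Complex.I) ∂(μ.map fun ω k => X k ω) =
      charFun ν t ^ n := fun n => by
    rw [← charFun_map_sum_range hX hXi hν n t, charFun_apply_real,
      integral_map (f := fun x => Complex.exp (t * S (n, x) * Complex.I)) hseq.aemeasurable
        (hg.comp measurable_prodMk_left).aestronglyMeasurable,
      integral_map (by fun_prop) (by fun_prop)]
  rw [hlaw, charFun_apply_real, integral_map hS.aemeasurable (by fun_prop), integral_prod]
  · simp_rw [hinner]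
    rw [integral_countable (Integrable.of_bound (by fun_prop) 1 (ae_of_all _ fun n => by
      simpa using pow_le_one₀ (norm_nonneg _) (norm_charFun_le_one (μ := ν) t)))]
    simp_rw [map_measureReal_apply hM (measurableSet_singleton _), Complex.real_smul]
  · refine Integrable.of_bound hg.aestronglyMeasurable 1 (ae_of_all _ fun p => ?_)
    rw [← Complex.ofReal_mul, Complex.norm_exp_ofReal_mul_I]

end CompoundSum

lemma tsum_measureReal_mul_pow_of_binomial {Ω : Type*} [MeasurableSpace Ω] {μ : Measure Ω}
    {M : Ω → ℕ} {N : ℕ} {p : ℝ} (hp0 : 0 ≤ p) (hp1 : p ≤ 1)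
    (hM : ∀ k, μ {ω | M ω = k} = ENNReal.ofReal (N.choose k * p ^ k * (1 - p) ^ (N - k)))
    (z : ℂ) :
    ∑' n, μ.real (M ⁻¹' {n}) * z ^ n = (p * z + (1 - p)) ^ N := by
  have hprob : ∀ n, μ.real (M ⁻¹' {n}) = N.choose n * p ^ n * (1 - p) ^ (N - n) := fun n => by
    have := sub_nonneg.2 hp1
    rw [measureReal_def, show M ⁻¹' {n} = {ω | M ω = n} from rfl, hM n,
      ENNReal.toReal_ofReal (by positivity)]
  rw [tsum_eq_sum (s := Finset.range (N + 1)) fun n hn => by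
      rw [hprob, Nat.choose_eq_zero_of_lt (by simpa using hn)]
      simp,
    add_pow]
  refine Finset.sum_congr rfl fun n _ => ?_
  rw [hprob]
  push_cast
  ring

theorem upper_set_distribution_identity_general
    (τ : ℝ)
    (N : ℕ) (hN : 0 < N)
    (Ω : Type) [MeasurableSpace Ω] (μ : Measure Ω) [IsProbabilityMeasure μ]
    (Λ : Fin N → Ω → ℝ)
    (hΛ_meas : ∀ i, Measurable (Λ i))
    (hΛ_indep : iIndepFun Λ μ)
    (hΛ_pareto : ∀ (i : Fin N) (x : ℝ), 1 ≤ x →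
      μ {ω | x < Λ i ω} = ENNReal.ofReal (x ^ (-(τ - 1))))
    (α : ℝ) (hα : 0 < α)
    (hp_le_one : (N : ℝ) ^ (-((τ - 1) * α)) ≤ 1)
    (Nα : Ω → ℕ) (hNα_meas : Measurable Nα)
    (hNα_binomial : ∀ k : ℕ,
      μ {ω | Nα ω = k} =
        ENNReal.ofReal ((N.choose k : ℝ) * ((N : ℝ) ^ (-((τ - 1) * α))) ^ k *
          (1 - (N : ℝ) ^ (-((τ - 1) * α))) ^ (N - k)))
    (Λt : ℕ → Ω → ℝ)
    (hΛt_meas : ∀ k, Measurable (Λt k))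
    (hΛt_indep : iIndepFun Λt μ)
    (hΛt_pareto : ∀ (k : ℕ) (x : ℝ), 1 ≤ x →
      μ {ω | x < Λt k ω} = ENNReal.ofReal (x ^ (-(τ - 1))))
    (h_indep : IndepFun Nα (fun ω (k : ℕ) => Λt k ω) μ) :
    μ.map (fun ω => ∑ i, Set.indicator {x : ℝ | (N : ℝ) ^ α < x} id (Λ i ω)) =
      μ.map (fun ω => (N : ℝ) ^ α * ∑ k ∈ Finset.range (Nα ω), Λt k ω) := by
  set c := (N : ℝ) ^ α
  have hc : 1 ≤ c := Real.one_le_rpow (by exact_mod_cast hN) hα.le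
  have hp : (N : ℝ) ^ (-((τ - 1) * α)) = c ^ (-(τ - 1)) := by
    rw [← Real.rpow_mul (Nat.cast_nonneg N)]
    ring_nf
  set ν := μ.map (Λt 0)
  have : IsProbabilityMeasure ν := Measure.isProbabilityMeasure_map (hΛt_meas 0).aemeasurable
  have hν : IsParetoLaw ν (τ - 1) := isParetoLaw_map (hΛt_meas 0) (hΛt_pareto 0)
  have hlaw : ∀ {X : Ω → ℝ}, Measurable X →
      (∀ x : ℝ, 1 ≤ x → μ {ω | x < X ω} = ENNReal.ofReal (x ^ (-(τ - 1)))) → μ.map X = ν :=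
    fun hX hXp => have := Measure.isProbabilityMeasure_map (μ := μ) hX.aemeasurable
      (isParetoLaw_map hX hXp).ext hν
  refine Measure.ext_of_charFun (funext fun t => ?_)
  change charFun (μ.map fun ω => ∑ i, (Ioi c).indicator id (Λ i ω)) t = _
  rw [hν.charFun_map_sum_indicator_Ioi hc hΛ_meas hΛ_indep
      (fun i => hlaw (hΛ_meas i) (hΛ_pareto i)),
    charFun_map_mul_comp (measurable_sum_range_random hΛt_meas hNα_meas).aemeasurable,
    charFun_map_sum_range_of_indepFun hΛt_meas hΛt_indep
      (fun k => hlaw (hΛt_meas k) (hΛt_pareto k)) hNα_meas h_indep,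
    tsum_measureReal_mul_pow_of_binomial (by positivity) hp_le_one hNα_binomial, hp,
    Fintype.card_fin]
  ring

/-- equation (9) in the proof of Lemma 3.1 of Norros–Reittu.
If `N_α ~ Binomial(N, N^{-(τ-1)α})` and `Λ̃_1, Λ̃_2, …` are fresh i.i.d. Pareto(τ)
copies independent of `N_α`, then `∑_{i=1}^N Λ_i 1{Λ_i > N^α}` is distributed as
`N^α ∑_{k=1}^{N_α} Λ̃_k`. -/
theorem upper_set_distribution_identity
    (τ : ℝ) (hτ : τ ∈ Set.Ioo (2 : ℝ) 3)
    (N : ℕ) (hN : 0 < N)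
    (Ω : Type) [MeasurableSpace Ω] (μ : Measure Ω) [IsProbabilityMeasure μ]
    (Λ : Fin N → Ω → ℝ)
    (hΛ_meas : ∀ i, Measurable (Λ i))
    (hΛ_ge_one : ∀ i ω, 1 ≤ Λ i ω)
    (hΛ_indep : iIndepFun Λ μ)
    (hΛ_pareto : ∀ (i : Fin N) (x : ℝ), 1 ≤ x →
      μ {ω | x < Λ i ω} = ENNReal.ofReal (x ^ (-(τ - 1))))
    (α : ℝ) (hα : 0 < α)
    (hp_le_one : (N : ℝ) ^ (-((τ - 1) * α)) ≤ 1)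
    (Nα : Ω → ℕ) (hNα_meas : Measurable Nα)
    (hNα_binomial : ∀ k : ℕ,
      μ {ω | Nα ω = k} =
        ENNReal.ofReal ((N.choose k : ℝ) * ((N : ℝ) ^ (-((τ - 1) * α))) ^ k *
          (1 - (N : ℝ) ^ (-((τ - 1) * α))) ^ (N - k)))
    (Λt : ℕ → Ω → ℝ)
    (hΛt_meas : ∀ k, Measurable (Λt k))
    (hΛt_ge_one : ∀ k ω, 1 ≤ Λt k ω)
    (hΛt_indep : iIndepFun Λt μ)
    (hΛt_pareto : ∀ (k : ℕ) (x : ℝ), 1 ≤ x →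
      μ {ω | x < Λt k ω} = ENNReal.ofReal (x ^ (-(τ - 1))))
    (h_indep : IndepFun Nα (fun ω (k : ℕ) => Λt k ω) μ) :
    μ.map (fun ω => ∑ i, Set.indicator {x : ℝ | (N : ℝ) ^ α < x} id (Λ i ω)) =
      μ.map (fun ω => (N : ℝ) ^ α * ∑ k ∈ Finset.range (Nα ω), Λt k ω) :=
  upper_set_distribution_identity_general τ N hN Ω μ Λ hΛ_meas hΛ_indep hΛ_pareto α hα hp_le_one Nα
    hNα_meas hNα_binomial Λt hΛt_meas hΛt_indep hΛt_pareto h_indep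
end

section
/- Condition on Λ = (Λ_1,…,Λ_N), and consider the marked branching process (Z, J): Z_0 = 1 with the single individual's mark J_{0,1} uniform on {1,…,N}, and each individual bearing mark i gives birth, independently for each j ∈ {1,…,N}, to a Poisson(Λ_iΛ_j/L_N)-distributed number of children bearing mark j. Process the individuals generation by generation (and within a generation in order), pruning each individual whose mark has already appeared among previously processed individuals, together with all its descendants; let Ĵ_k denote the set of marks present in generation k of the pruned process. Also define the neighbourhood shells of G_N: N_0 = {i_0} with i_0 uniform on {1,…,N}, and N_{k+1} = the set of vertices outside N_0 ∪ … ∪ N_k that are adjacent to some vertex of N_k. Then, conditionally on Λ, the sequence of sets (Ĵ_k)_{k≥0} has the same distribution as the sequence (N_k)_{k≥0}. -/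
open MeasureTheory ProbabilityTheory Filter Set

noncomputable section

/-- Poisson edge rate for an unordered pair of vertices, given capacities `l`. -/
def edgeRate {N : ℕ} (l : Fin N → ℝ) : Sym2 (Fin N) → NNReal :=
  Sym2.lift ⟨fun i j => Real.toNNReal (l i * l j / ∑ k, l k),
    fun i j => by dsimp only; rw [mul_comm (l i) (l j)]⟩

/-- The simple graph associated with a family of edge multiplicities:
two distinct vertices are adjacent iff there is at least one edge between them. -/
def graphOf {N : ℕ} (e : Sym2 (Fin N) → ℕ) : SimpleGraph (Fin N) where
  Adj i j := i ≠ j ∧ 1 ≤ e s(i, j)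
  symm := ⟨fun i j h => ⟨h.1.symm, by rw [Sym2.eq_swap]; exact h.2⟩⟩
  loopless := ⟨fun i h => h.1 rfl⟩

/-- The list of children marks produced by individual number `i` of generation `n`
bearing mark `m`: for each mark `j` (in order), `B n i m j` children of mark `j`. -/
def childList (N : ℕ) (B : ℕ → ℕ → Fin N → Fin N → ℕ) (n i : ℕ) (m : Fin N) :
    List (Fin N) :=
  ((List.finRange N).map fun j => List.replicate (B n i m j) j).flatten

/-- The full marked branching process: the list of marks of generation `n`,
in order of birth, starting from a single individual with mark `r`. -/
def fullGen (N : ℕ) (B : ℕ → ℕ → Fin N → Fin N → ℕ) (r : Fin N) : ℕ → List (Fin N)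
  | 0 => [r]
  | n + 1 => (((fullGen N B r n).zipIdx.map Prod.swap).map fun p => childList N B n p.1 p.2).flatten

/-- Process a list of (position, mark) pairs in order, keeping an individual iff its
mark has not been seen before, and recording every processed mark as seen. -/
def processList (N : ℕ) : Finset (Fin N) → List (ℕ × Fin N) →
    List (ℕ × Fin N) × Finset (Fin N)
  | seen, [] => ([], seen)
  | seen, q :: rest =>
    let r := processList N (insert q.2 seen) rest
    (if q.2 ∈ seen then r.1 else q :: r.1, r.2)

/-- The global position in generation `n+1` of the first child of the individual
at position `i` of generation `n` (whose marks are listed in `g`). -/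
def offsetAt (N : ℕ) (B : ℕ → ℕ → Fin N → Fin N → ℕ) (g : List (Fin N)) (n i : ℕ) : ℕ :=
  (((g.take i).zipIdx.map Prod.swap).map fun p => (childList N B n p.1 p.2).length).sum

/-- The pruned ("reduced") process: the state after generation `k` consists of the
list of kept individuals of generation `k` (as position–mark pairs, in order) and
the set of marks seen so far.  An individual is processed only if its parent was
kept, and it is pruned iff its mark was already seen. -/
def prunedState (N : ℕ) (B : ℕ → ℕ → Fin N → Fin N → ℕ) (r : Fin N) :
    ℕ → List (ℕ × Fin N) × Finset (Fin N)
  | 0 => ([(0, r)], {r})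
  | n + 1 =>
    let st := prunedState N B r n
    processList N st.2
      ((st.1.map fun q =>
        ((childList N B n q.1 q.2).zipIdx.map Prod.swap).map fun c =>
          (offsetAt N B (fullGen N B r n) n q.1 + c.1, c.2)).flatten)

/-- The set `Ĵ_k` of marks present in generation `k` of the pruned process. -/
def prunedMarks (N : ℕ) (B : ℕ → ℕ → Fin N → Fin N → ℕ) (r : Fin N) (k : ℕ) :
    Set (Fin N) :=
  {j | ∃ q ∈ (prunedState N B r k).1, q.2 = j}

/-- Auxiliary for neighbourhood shells: (current shell, union of shells so far). -/
def shellsAux (N : ℕ) (G : SimpleGraph (Fin N)) (v : Fin N) :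
    ℕ → Set (Fin N) × Set (Fin N)
  | 0 => ({v}, {v})
  | n + 1 =>
    let p := shellsAux N G v n
    ({j | j ∉ p.2 ∧ ∃ i ∈ p.1, G.Adj i j},
      p.2 ∪ {j | j ∉ p.2 ∧ ∃ i ∈ p.1, G.Adj i j})

/-- The `k`-th neighbourhood shell `N_k(v)` of `v` in `G`. -/
def shells (N : ℕ) (G : SimpleGraph (Fin N)) (v : Fin N) (k : ℕ) : Set (Fin N) :=
  (shellsAux N G v k).1

/-!
Both roots are uniform and independent of the Poisson variables, so conditioning on the root
reduces the claim to a fixed root `v`. From there, in both models the set of generation `k + 1`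
consists of the unseen vertices `j` such that a count attached to some pair `(m, j)`, `m` in the
current set, is nonzero: the edge multiplicity `E s(m, j)` in the graph, the number of
`j`-children of the kept individual with mark `m` in the branching process. These counts are
independent of everything that determined the first `k + 1` sets (edges from a shell to unseen
vertices have never been examined, offspring variables of generation `k` have never been read)
and have the same Poisson laws in both models. Hence both cylinder probabilities get multiplied at
every step by the same factor `shellWeight`.
-/

open scoped NNReal ENNReal

section Conditioning

variable {Ω α : Type*} {mΩ : MeasurableSpace Ω} {μ : Measure Ω}

lemma measure_setOf_mem_eq_tsum [Countable α] {Φ : Ω → α}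
    (hΦ : ∀ a, MeasurableSet (Φ ⁻¹' {a})) {G : α → Set Ω} (hG : ∀ a, MeasurableSet (G a)) :
    μ {ω | ω ∈ G (Φ ω)} = ∑' a, μ (Φ ⁻¹' {a} ∩ G a) := by
  have hfib : {ω | ω ∈ G (Φ ω)} = ⋃ a, Φ ⁻¹' {a} ∩ G a := by
    ext ω; simp
  rw [hfib, measure_iUnion _ fun a => (hΦ a).inter (hG a)]
  intro a b hab
  exact Disjoint.mono Set.inter_subset_left Set.inter_subset_left
    ((Set.disjoint_singleton.2 hab).preimage Φ)

lemma measure_inter_setOf_mem_eq_mul [Countable α] {Φ : Ω → α}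
    (hΦ : ∀ a, MeasurableSet (Φ ⁻¹' {a})) {D : Set Ω} (hD : MeasurableSet D) {G : α → Set Ω}
    (hG : ∀ a, MeasurableSet (G a)) {w : ℝ≥0∞}
    (hfiber : ∀ a, μ (Φ ⁻¹' {a} ∩ D ∩ G a) = μ (Φ ⁻¹' {a} ∩ D) * w) :
    μ (D ∩ {ω | ω ∈ G (Φ ω)}) = μ D * w := by
  have hsplit : D ∩ {ω | ω ∈ G (Φ ω)} = {ω | ω ∈ D ∩ G (Φ ω)} := rfl
  rw [hsplit, measure_setOf_mem_eq_tsum hΦ fun a => hD.inter (hG a)]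
  simp_rw [← Set.inter_assoc, hfiber]
  rw [ENNReal.tsum_mul_right, ← measure_setOf_mem_eq_tsum hΦ fun _ => hD]
  rfl

lemma measure_setOf_mem_eq_sum_mul_of_indep [Fintype α] [MeasurableSpace α]
    [MeasurableSingletonClass α] {R : Ω → α} (hR : Measurable R)
    {m : MeasurableSpace Ω} (hm : m ≤ mΩ) (hind : Indep (MeasurableSpace.comap R ‹_›) m μ)
    {D : α → Set Ω} (hD : ∀ a, MeasurableSet[m] (D a)) :
    μ {ω | ω ∈ D (R ω)} = ∑ a, μ {ω | R ω = a} * μ (D a) := by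
  rw [measure_setOf_mem_eq_tsum (fun a => hR (measurableSet_singleton a))
    (fun a => hm _ (hD a)), tsum_fintype]
  refine Finset.sum_congr rfl fun a _ => (Indep_iff _ _ _).1 hind _ _ ?_ (hD a)
  exact ⟨{a}, measurableSet_singleton a, rfl⟩

end Conditioning

section FiniteDependence

variable {Ω ι β γ : Type*} {m : MeasurableSpace Ω}

lemma measurable_of_finite_dependence [MeasurableSpace β] [Countable β]
    [MeasurableSingletonClass β] [Nonempty β] (X : ι → Ω → β) {s : Set ι} (hs : s.Finite)
    (hX : ∀ i ∈ s, Measurable[m] (X i)) (f : (ι → β) → γ)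
    (hf : ∀ x y, (∀ i ∈ s, x i = y i) → f x = f y) :
    Measurable[m, ⊤] fun ω => f fun i => X i ω := by
  classical
  have : Finite s := hs.to_subtype
  let extend : (s → β) → ι → β := fun y i =>
    if h : i ∈ s then y ⟨i, h⟩ else Classical.arbitrary β
  have hfactor : (fun ω => f fun i => X i ω) = (f ∘ extend) ∘ fun ω (i : s) => X i ω := by
    funext ω
    exact hf _ _ fun i hi => by simp [extend, hi]
  rw [hfactor]
  exact fun t _ =>
    measurable_pi_lambda _ (fun i : s => hX i i.2) (.of_discrete (s := (f ∘ extend) ⁻¹' t))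

lemma measurable_apply_of_countable [Countable β] {Φ : Ω → β} (hΦ : Measurable[m, ⊤] Φ)
    {G : Ω → β → γ} (hG : ∀ b, Measurable[m, ⊤] fun ω => G ω b) :
    Measurable[m, ⊤] fun ω => G ω (Φ ω) := by
  intro t _
  have hfib : (fun ω => G ω (Φ ω)) ⁻¹' t = ⋃ b, Φ ⁻¹' {b} ∩ (fun ω => G ω b) ⁻¹' t := by
    ext ω; simp
  rw [hfib]
  exact .iUnion fun b => (hΦ trivial).inter (hG b trivial)

end FiniteDependence

section Step

variable {Ω ι κ β : Type*} {mΩ : MeasurableSpace Ω} {μ : Measure Ω}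
  [mβ : MeasurableSpace β]

lemma measurable_of_mem_biSup_comap {F : ι → Ω → β} {s : Set ι} {i : ι} (hi : i ∈ s) :
    Measurable[⨆ i ∈ s, mβ.comap (F i)] (F i) :=
  (comap_measurable (F i)).mono (le_iSup₂ (f := fun i (_ : i ∈ s) => mβ.comap (F i)) i hi) le_rfl

lemma measurable_pi_of_forall_mem {F : ι → Ω → β} {s : Set ι} {key : κ → ι}
    (hkey : ∀ p, key p ∈ s) : Measurable[⨆ i ∈ s, mβ.comap (F i)] fun ω p => F (key p) ω :=
  @measurable_pi_lambda _ _ _ (⨆ i ∈ s, mβ.comap (F i)) _ _ fun p =>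
    measurable_of_mem_biSup_comap (hkey p)

lemma iSup_comap_le_comap_pi (F : ι → Ω → β) (s : Set ι) :
    ⨆ i ∈ s, mβ.comap (F i) ≤ MeasurableSpace.comap (fun ω i => F i ω) MeasurableSpace.pi :=
  iSup₂_le fun i _ =>
    ((measurable_pi_apply i).comp (comap_measurable (fun ω i => F i ω))).comap_le

lemma measure_inter_preimage_eq_mul_pi [Fintype κ] {F : ι → Ω → β} (hF : ∀ i, Measurable (F i))
    (hind : iIndepFun F μ) {P : Set ι} {D : Set Ω}
    (hD : MeasurableSet[⨆ i ∈ P, mβ.comap (F i)] D)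
    {key : κ → ι} (hkey : key.Injective) (hkeyP : ∀ p, key p ∉ P)
    {C : Set (κ → β)} (hC : MeasurableSet C) :
    μ (D ∩ (fun ω p => F (key p) ω) ⁻¹' C) = μ D * Measure.pi (fun p => μ.map (F (key p))) C := by
  have hindep : Indep (⨆ i ∈ P, mβ.comap (F i))
      (⨆ i ∈ Set.range key, mβ.comap (F i)) μ :=
    indep_iSup_of_disjoint (fun i => (hF i).comap_le) hind.iIndep
      (Set.disjoint_right.2 fun _ ⟨p, hp⟩ => hp ▸ hkeyP p)
  have hlaw : μ.map (fun ω p => F (key p) ω) = Measure.pi fun p => μ.map (F (key p)) :=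
    (hind.precomp hkey).map_fun_eq_pi_map fun p => (hF (key p)).aemeasurable
  rw [(Indep_iff _ _ _).1 hindep _ _ hD
      (measurable_pi_of_forall_mem (fun p => Set.mem_range_self p) hC), ← hlaw,
    Measure.map_apply (measurable_pi_lambda _ fun p => hF _) hC]

end Step

section Pattern

variable {α : Type*} (S T : Set α)

def FreshPairs : Type _ := {p : α × α // p.1 ∈ S ∧ p.2 ∉ T}

instance [Finite α] : Finite (FreshPairs S T) := Subtype.finite

noncomputable instance [Finite α] : Fintype (FreshPairs S T) := Fintype.ofFinite _

variable {S T}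

def FreshPairs.edge (p : FreshPairs S T) : Sym2 α := s(p.1.1, p.1.2)

lemma FreshPairs.edge_injective (hST : S ⊆ T) : (FreshPairs.edge (S := S) (T := T)).Injective := by
  rintro ⟨⟨m, j⟩, hm, hj⟩ ⟨⟨m', j'⟩, hm', hj'⟩ h
  rcases Sym2.eq_iff.1 h with ⟨rfl, rfl⟩ | ⟨rfl, rfl⟩
  · rfl
  · exact absurd (hST hm) hj'

def reachedBy (x : FreshPairs S T → ℕ) : Set α := {j | ∃ p : FreshPairs S T, p.1.2 = j ∧ x p ≠ 0}

lemma reachedBy_eq (X : α → α → ℕ) :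
    reachedBy (fun p : FreshPairs S T => X p.1.1 p.1.2) = {j | j ∉ T ∧ ∃ m ∈ S, X m j ≠ 0} := by
  ext j
  constructor
  · rintro ⟨⟨⟨m, j⟩, hm, hj⟩, rfl, hX⟩
    exact ⟨hj, m, hm, hX⟩
  · rintro ⟨hj, m, hm, hX⟩
    exact ⟨⟨(m, j), hm, hj⟩, rfl, hX⟩

def shellWeight [Finite α] (r : α → α → ℝ≥0) (S T U : Set α) : ℝ≥0∞ :=
  Measure.pi (fun p : FreshPairs S T => poissonMeasure (r p.1.1 p.1.2)) {x | reachedBy x = U}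

lemma measurableSet_reachedBy_eq [Finite α] (U : Set α) :
    MeasurableSet {x : FreshPairs S T → ℕ | reachedBy x = U} := .of_discrete

end Pattern

section AgreeUpTo

variable {Ω α : Type*} (X : Ω → ℕ → Set α) (A : ℕ → Set α)

def agreeUpTo (n : ℕ) : Set Ω := {ω | ∀ k ≤ n, X ω k = A k}

lemma agreeUpTo_zero : agreeUpTo X A 0 = {ω | X ω 0 = A 0} := by
  simp [agreeUpTo]

lemma agreeUpTo_succ (n : ℕ) :
    agreeUpTo X A (n + 1) = agreeUpTo X A n ∩ {ω | X ω (n + 1) = A (n + 1)} := by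
  ext ω
  simp only [agreeUpTo, Set.mem_inter_iff, Set.mem_ofPred_eq]
  exact ⟨fun h => ⟨fun k hk => h k (hk.trans n.le_succ), h _ le_rfl⟩,
    fun h k hk => (Nat.le_succ_iff.1 hk).elim (h.1 k) fun e => e ▸ h.2⟩

lemma agreeUpTo_eq_biInter (n : ℕ) : agreeUpTo X A n = ⋂ k ≤ n, {ω | X ω k = A k} := by
  ext ω
  simp [agreeUpTo]

end AgreeUpTo

section Shells

variable {N : ℕ} (G : SimpleGraph (Fin N)) (v : Fin N)

lemma shellsAux_snd (k : ℕ) : (shellsAux N G v k).2 = ⋃ i ≤ k, shells N G v i := by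
  induction k with
  | zero => simp [shellsAux, shells]
  | succ k ih =>
    rw [Set.biUnion_le_succ, ← ih]
    rfl

lemma shells_succ (k : ℕ) :
    shells N G v (k + 1) =
      {j | j ∉ ⋃ i ≤ k, shells N G v i ∧ ∃ m ∈ shells N G v k, G.Adj m j} := by
  rw [← shellsAux_snd]
  rfl

lemma not_mem_shells_of_lt {j : Fin N} {i k : ℕ} (hj : j ∈ shells N G v k) (hik : i < k) :
    j ∉ shells N G v i := by
  obtain ⟨k, rfl⟩ := Nat.exists_eq_add_of_lt hik
  rw [shells_succ] at hj
  exact fun hi => hj.1 (Set.mem_iUnion₂.2 ⟨i, by omega, hi⟩)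

end Shells

section GraphExploration

variable {Ω : Type*} {N : ℕ} (A : ℕ → Set (Fin N))

def examinedEdges (n : ℕ) : Set (Sym2 (Fin N)) :=
  ⋃ k < n, Set.range (FreshPairs.edge (S := A k) (T := ⋃ i ≤ k, A i))

lemma examinedEdges_mono {k n : ℕ} (hkn : k ≤ n) : examinedEdges A k ⊆ examinedEdges A n := by
  simp only [examinedEdges, Set.subset_def, Set.mem_iUnion]
  exact fun e ⟨i, hik, he⟩ => ⟨i, hik.trans_le hkn, he⟩

lemma edge_mem_examinedEdges {k : ℕ} (p : FreshPairs (A k) (⋃ i ≤ k, A i)) :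
    p.edge ∈ examinedEdges A (k + 1) :=
  Set.mem_iUnion₂.2 ⟨k, k.lt_succ_self, p, rfl⟩

lemma edge_not_mem_examinedEdges {k : ℕ} (hdisj : ∀ i < k, Disjoint (A k) (A i))
    (p : FreshPairs (A k) (⋃ i ≤ k, A i)) : p.edge ∉ examinedEdges A k := by
  simp only [examinedEdges, Set.mem_iUnion, Set.mem_range, not_exists]
  rintro i hik ⟨⟨m, j⟩, hm, hj⟩ h
  rcases Sym2.eq_iff.1 h with ⟨rfl, rfl⟩ | ⟨rfl, rfl⟩
  · exact Set.disjoint_left.1 (hdisj i hik) p.2.1 hm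
  · exact p.2.2 (Set.mem_iUnion₂.2 ⟨i, hik.le, hm⟩)

variable (v : Fin N)

lemma shells_graphOf_succ {e : Sym2 (Fin N) → ℕ} {k : ℕ}
    (h : ∀ i ≤ k, shells N (graphOf e) v i = A i) :
    shells N (graphOf e) v (k + 1) =
      reachedBy fun p : FreshPairs (A k) (⋃ i ≤ k, A i) => e p.edge := by
  rw [shells_succ, Set.iUnion₂_congr h, h k le_rfl]
  refine Eq.trans ?_ (reachedBy_eq fun m j => e s(m, j)).symm
  ext j
  refine and_congr_right fun hj => exists_congr fun m => and_congr_right fun hm => ?_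
  have hmj : m ≠ j := fun hmj => hj (Set.mem_iUnion₂.2 ⟨k, le_rfl, hmj ▸ hm⟩)
  simp [graphOf, hmj, Nat.one_le_iff_ne_zero]

variable (E : Sym2 (Fin N) → Ω → ℕ)

lemma agreeUpTo_shells_succ (k : ℕ) :
    agreeUpTo (fun ω => shells N (graphOf fun e => E e ω) v) A (k + 1) =
      agreeUpTo (fun ω => shells N (graphOf fun e => E e ω) v) A k ∩
        (fun ω (p : FreshPairs (A k) (⋃ i ≤ k, A i)) => E p.edge ω) ⁻¹'
          {x | reachedBy x = A (k + 1)} := by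
  rw [agreeUpTo_succ]
  ext ω
  exact and_congr_right fun hω => by rw [Set.mem_ofPred_eq, shells_graphOf_succ A v hω]; rfl

lemma measurableSet_agreeUpTo_shells [MeasurableSpace Ω] (n : ℕ) :
    MeasurableSet[⨆ e ∈ examinedEdges A n, MeasurableSpace.comap (E e) inferInstance]
      (agreeUpTo (fun ω => shells N (graphOf fun e => E e ω) v) A n) := by
  induction n with
  | zero =>
    rw [agreeUpTo_zero]
    exact .const (({v} : Set (Fin N)) = A 0)
  | succ n ih =>
    rw [agreeUpTo_shells_succ]
    have hmono : ⨆ e ∈ examinedEdges A n, MeasurableSpace.comap (E e) inferInstance ≤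
        ⨆ e ∈ examinedEdges A (n + 1), MeasurableSpace.comap (E e) inferInstance :=
      biSup_mono fun e => (examinedEdges_mono A n.le_succ ·)
    exact (hmono _ ih).inter (measurable_pi_of_forall_mem (edge_mem_examinedEdges A)
      (measurableSet_reachedBy_eq _))

lemma measure_agreeUpTo_shells_succ [MeasurableSpace Ω] {μ : Measure Ω} (l : Fin N → ℝ)
    (hE_meas : ∀ e, Measurable (E e)) (hE_indep : iIndepFun E μ)
    (hE_poisson : ∀ e, μ.map (E e) = poissonMeasure (edgeRate l e)) (k : ℕ) :
    μ (agreeUpTo (fun ω => shells N (graphOf fun e => E e ω) v) A (k + 1)) =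
      μ (agreeUpTo (fun ω => shells N (graphOf fun e => E e ω) v) A k) *
        shellWeight (fun m j => edgeRate l s(m, j)) (A k) (⋃ i ≤ k, A i) (A (k + 1)) := by
  rcases (agreeUpTo (fun ω => shells N (graphOf fun e => E e ω) v) A k).eq_empty_or_nonempty
    with hempty | ⟨ω, hω⟩
  · rw [agreeUpTo_shells_succ, hempty]
    simp
  -- on a nonempty cylinder the `A i` are disjoint shells, so no fresh edge has been examined yet
  have hdisj : ∀ i < k, Disjoint (A k) (A i) := fun i hik => by
    rw [← hω k le_rfl, ← hω i hik.le]
    exact Set.disjoint_left.2 fun j hj => not_mem_shells_of_lt _ _ hj hik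
  rw [agreeUpTo_shells_succ, measure_inter_preimage_eq_mul_pi hE_meas hE_indep
    (measurableSet_agreeUpTo_shells A v E k)
    (FreshPairs.edge_injective (Set.subset_iUnion₂ (s := fun i (_ : i ≤ k) => A i) k le_rfl))
    (edge_not_mem_examinedEdges A hdisj) (measurableSet_reachedBy_eq _)]
  simp only [hE_poisson]
  rfl

end GraphExploration

section PrunedProcess

variable {N : ℕ}

lemma mem_childList {b : ℕ → ℕ → Fin N → Fin N → ℕ} {n i : ℕ} {m j : Fin N} :
    j ∈ childList N b n i m ↔ b n i m j ≠ 0 := by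
  simp [childList, List.mem_flatten, and_comm]

lemma setOf_mem_cons_snd (q : ℕ × Fin N) (L : List (ℕ × Fin N)) :
    {m | ∃ q' ∈ q :: L, q'.2 = m} = insert q.2 {m | ∃ q' ∈ L, q'.2 = m} := by
  ext m
  simp [eq_comm]

lemma processList_snd : ∀ (s : Finset (Fin N)) (L : List (ℕ × Fin N)),
    ((processList N s L).2 : Set (Fin N)) = ↑s ∪ {m | ∃ q ∈ L, q.2 = m}
  | s, [] => by simp [processList]
  | s, q :: L => by
    rw [processList, processList_snd, setOf_mem_cons_snd, Finset.coe_insert,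
      Set.insert_union, Set.union_insert]

lemma processList_fst : ∀ (s : Finset (Fin N)) (L : List (ℕ × Fin N)),
    {m | ∃ q ∈ (processList N s L).1, q.2 = m} = {m | ∃ q ∈ L, q.2 = m} \ ↑s
  | s, [] => by simp [processList]
  | s, q :: L => by
    have ih := processList_fst (insert q.2 s) L
    rw [Finset.coe_insert] at ih
    by_cases hq : q.2 ∈ s
    · rw [processList, if_pos hq, ih, setOf_mem_cons_snd, Set.insert_sdiff_of_mem _ hq,
        Set.insert_eq_of_mem (Finset.mem_coe.2 hq)]
    · rw [processList, if_neg hq, setOf_mem_cons_snd, ih, setOf_mem_cons_snd,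
        Set.insert_sdiff_of_notMem _ hq]
      ext m
      by_cases hm : m = q.2 <;> simp [hm]

lemma processList_nodup : ∀ (s : Finset (Fin N)) (L : List (ℕ × Fin N)),
    ((processList N s L).1.map Prod.snd).Nodup ∧ ∀ q ∈ (processList N s L).1, q.2 ∉ s
  | s, [] => by simp [processList]
  | s, q :: L => by
    obtain ⟨hnodup, hfresh⟩ := processList_nodup (insert q.2 s) L
    have hfresh' : ∀ q' ∈ (processList N (insert q.2 s) L).1, q'.2 ∉ s :=
      fun q' hq' hs => hfresh q' hq' (Finset.mem_insert_of_mem hs)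
    by_cases hq : q.2 ∈ s
    · rw [processList, if_pos hq]
      exact ⟨hnodup, hfresh'⟩
    · rw [processList, if_neg hq]
      refine ⟨List.nodup_cons.2 ⟨fun hmem => ?_, hnodup⟩, ?_⟩
      · obtain ⟨q', hq', hq'q⟩ := List.mem_map.1 hmem
        exact hfresh q' hq' (hq'q ▸ Finset.mem_insert_self _ _)
      · simpa [hq] using hfresh'

def children (N : ℕ) (b : ℕ → ℕ → Fin N → Fin N → ℕ) (st : List (ℕ × Fin N))
    (g : List (Fin N)) (n : ℕ) : List (ℕ × Fin N) :=
  (st.map fun q => ((childList N b n q.1 q.2).zipIdx.map Prod.swap).map fun c =>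
    (offsetAt N b g n q.1 + c.1, c.2)).flatten

lemma setOf_mem_children_snd (b : ℕ → ℕ → Fin N → Fin N → ℕ) (st : List (ℕ × Fin N))
    (g : List (Fin N)) (n : ℕ) :
    {m | ∃ p ∈ children N b st g n, p.2 = m} = {j | ∃ q ∈ st, b n q.1 q.2 j ≠ 0} := by
  have hsnd : (children N b st g n).map Prod.snd =
      (st.map fun q => childList N b n q.1 q.2).flatten := by
    simp [children, List.map_flatten, Function.comp_def, List.zipIdx_map_fst]
  ext j
  simpa [mem_childList] using congrArg (j ∈ ·) hsnd

def posIn {α : Type*} [DecidableEq α] (L : List (ℕ × α)) (m : α) : ℕ :=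
  ((L.find? (·.2 = m)).map Prod.fst).getD 0

lemma posIn_eq_of_mem {α : Type*} [DecidableEq α] :
    ∀ {L : List (ℕ × α)}, (L.map Prod.snd).Nodup → ∀ {q}, q ∈ L → posIn L q.2 = q.1
  | a :: L, hnodup, q, hq => by
    rw [List.map_cons, List.nodup_cons] at hnodup
    rcases List.mem_cons.1 hq with rfl | hq
    · simp [posIn]
    · have hne : a.2 ≠ q.2 := fun h => hnodup.1 (h ▸ List.mem_map_of_mem hq)
      rw [posIn, List.find?_cons_of_neg (by simpa using hne)]
      exact posIn_eq_of_mem hnodup.2 hq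

variable (b : ℕ → ℕ → Fin N → Fin N → ℕ) (r : Fin N)

lemma prunedState_succ (k : ℕ) :
    prunedState N b r (k + 1) = processList N (prunedState N b r k).2
      (children N b (prunedState N b r k).1 (fullGen N b r k) k) := rfl

lemma prunedMarks_succ (k : ℕ) :
    prunedMarks N b r (k + 1) =
      {j | ∃ q ∈ (prunedState N b r k).1, b k q.1 q.2 j ≠ 0} \ ↑(prunedState N b r k).2 := by
  rw [prunedMarks, prunedState_succ, processList_fst, setOf_mem_children_snd]

lemma coe_prunedState_snd (k : ℕ) :
    ↑(prunedState N b r k).2 = ⋃ i ≤ k, prunedMarks N b r i := by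
  induction k with
  | zero => simp [prunedState, prunedMarks]
  | succ k ih =>
    rw [prunedState_succ, processList_snd, setOf_mem_children_snd, Set.biUnion_le_succ, ← ih,
      prunedMarks_succ, Set.union_sdiff_self]

lemma prunedState_nodup : ∀ k, ((prunedState N b r k).1.map Prod.snd).Nodup
  | 0 => by simp [prunedState]
  | _ + 1 => (processList_nodup _ _).1

lemma prunedMarks_succ_eq_reachedBy {A : ℕ → Set (Fin N)} {k : ℕ}
    (h : ∀ i ≤ k, prunedMarks N b r i = A i) :
    prunedMarks N b r (k + 1) = reachedBy fun p : FreshPairs (A k) (⋃ i ≤ k, A i) =>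
      b k (posIn (prunedState N b r k).1 p.1.1) p.1.1 p.1.2 := by
  set st := (prunedState N b r k).1
  have hA : A k = {m | ∃ q ∈ st, q.2 = m} := (h k le_rfl).symm
  rw [prunedMarks_succ, coe_prunedState_snd, Set.iUnion₂_congr h,
    reachedBy_eq fun m j => b k (posIn st m) m j, Set.sdiff_eq, Set.inter_comm]
  ext j
  refine and_congr_right fun _ => ⟨fun ⟨q, hq, hb⟩ => ⟨q.2, hA ▸ ⟨q, hq, rfl⟩, ?_⟩, ?_⟩
  · rwa [posIn_eq_of_mem (prunedState_nodup b r k) hq]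
  · rintro ⟨m, hm, hb⟩
    obtain ⟨q, hq, rfl⟩ := hA ▸ hm
    exact ⟨q, hq, by rwa [posIn_eq_of_mem (prunedState_nodup b r k) hq] at hb⟩

end PrunedProcess

section StateMeasurability

variable {N : ℕ}

-- Positions in generation `k + 1`, hence the offspring variables read by the pruned process, are
-- computed from the full generation `k`, which is therefore carried along.
abbrev ProcessState (N : ℕ) : Type := (List (ℕ × Fin N) × Finset (Fin N)) × List (Fin N)

def growStep (N : ℕ) (b : ℕ → ℕ → Fin N → Fin N → ℕ) (k : ℕ) (s : ProcessState N) :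
    ProcessState N :=
  (processList N s.1.2 (children N b s.1.1 s.2 k),
    ((s.2.zipIdx.map Prod.swap).map fun p => childList N b k p.1 p.2).flatten)

lemma prunedState_fullGen_succ (b : ℕ → ℕ → Fin N → Fin N → ℕ) (r : Fin N) (k : ℕ) :
    ((prunedState N b r (k + 1), fullGen N b r (k + 1)) : ProcessState N) =
      growStep N b k (prunedState N b r k, fullGen N b r k) := rfl

lemma fst_lt_length_of_mem_zipIdx_swap {α : Type*} {L : List α} {a : ℕ × α}
    (ha : a ∈ L.zipIdx.map Prod.swap) : a.1 < L.length := by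
  obtain ⟨x, hx, rfl⟩ := List.mem_map.1 ha
  simpa using (List.mem_zipIdx hx).2.1

lemma growStep_congr {b b' : ℕ → ℕ → Fin N → Fin N → ℕ} {k : ℕ}
    {s : ProcessState N}
    (hgen : ∀ i < s.2.length, b k i = b' k i) (hkept : ∀ q ∈ s.1.1, b k q.1 = b' k q.1) :
    growStep N b k s = growStep N b' k s := by
  have hchild : ∀ {i} m, b k i = b' k i → childList N b k i m = childList N b' k i m := by
    intro i m h
    simp only [childList, h]
  have hoffset : ∀ i, offsetAt N b s.2 k i = offsetAt N b' s.2 k i := fun i => by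
    refine congrArg List.sum (List.map_congr_left fun p hp => ?_)
    rw [hchild _ (hgen _ ((fst_lt_length_of_mem_zipIdx_swap hp).trans_le
      (List.length_take_le' _ _)))]
  simp only [growStep, children, hoffset]
  congr 1
  · refine congrArg (processList N s.1.2 ·.flatten) (List.map_congr_left fun q hq => ?_)
    rw [hchild _ (hkept q hq)]
  · exact congrArg List.flatten (List.map_congr_left fun p hp =>
      hchild _ (hgen _ (fst_lt_length_of_mem_zipIdx_swap hp)))

variable {Ω : Type*} (B : ℕ → ℕ → Fin N → Fin N → Ω → ℕ) (r : Fin N)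

abbrev pastGenerations (k : ℕ) : MeasurableSpace Ω :=
  ⨆ q ∈ {q : ℕ × ℕ × Fin N × Fin N | q.1 < k},
    MeasurableSpace.comap (B q.1 q.2.1 q.2.2.1 q.2.2.2) inferInstance

lemma pastGenerations_mono {k n : ℕ} (hkn : k ≤ n) : pastGenerations B k ≤ pastGenerations B n :=
  biSup_mono fun _ hq => lt_of_lt_of_le hq hkn

lemma measurable_of_lt_pastGenerations {a k : ℕ} (hak : a < k) (i : ℕ) (m j : Fin N) :
    Measurable[pastGenerations B k] (B a i m j) :=
  measurable_of_mem_biSup_comap (F := fun q : ℕ × ℕ × Fin N × Fin N => B q.1 q.2.1 q.2.2.1 q.2.2.2)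
    (i := (a, i, m, j)) hak

lemma measurable_prunedState_fullGen (k : ℕ) :
    Measurable[pastGenerations B k, ⊤] fun ω => ((prunedState N (fun a i m j => B a i m j ω) r k,
      fullGen N (fun a i m j => B a i m j ω) r k) : ProcessState N) := by
  induction k with
  | zero => exact fun t _ => .const ((([(0, r)], ({r} : Finset (Fin N))), [r]) ∈ t)
  | succ k ih =>
    simp only [prunedState_fullGen_succ]
    refine measurable_apply_of_countable
      (G := fun ω s => growStep N (fun a i m j => B a i m j ω) k s)
      (ih.mono (pastGenerations_mono B k.le_succ) le_rfl) fun s => ?_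
    have hfin : (({k} : Set ℕ) ×ˢ ((Set.Iio s.2.length ∪ {i | i ∈ s.1.1.map Prod.fst}) ×ˢ
        (Set.univ : Set (Fin N × Fin N)))).Finite :=
      (Set.finite_singleton k).prod (((Set.finite_Iio _).union (List.finite_toSet _)).prod
        Set.finite_univ)
    have := measurable_of_finite_dependence (m := pastGenerations B (k + 1))
      (fun q => B q.1 q.2.1 q.2.2.1 q.2.2.2) hfin
      (fun q hq => measurable_of_lt_pastGenerations B
        (Nat.lt_succ_of_le (Set.mem_singleton_iff.1 hq.1).le) _ _ _)
      (fun x => growStep N (fun a i m j => x (a, i, m, j)) k s) fun x y hxy => growStep_congr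
        (fun i hi => funext₂ fun m j => hxy (k, i, m, j) ⟨rfl, Or.inl hi, trivial⟩)
        (fun q hq => funext₂ fun m j =>
          hxy (k, q.1, m, j) ⟨rfl, Or.inr (List.mem_map_of_mem (f := Prod.fst) hq), trivial⟩)
    exact this

end StateMeasurability

section BranchingExploration

variable {Ω : Type*} {N : ℕ} (B : ℕ → ℕ → Fin N → Fin N → Ω → ℕ) (r : Fin N) (A : ℕ → Set (Fin N))

lemma measurableSet_agreeUpTo_prunedMarks (n : ℕ) :
    MeasurableSet[pastGenerations B n]
      (agreeUpTo (fun ω => prunedMarks N (fun a i m j => B a i m j ω) r) A n) := by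
  rw [agreeUpTo_eq_biInter]
  refine MeasurableSet.biInter (Set.to_countable _) fun k hk => ?_
  exact (measurable_prunedState_fullGen B r k).mono (pastGenerations_mono B hk) le_rfl
    (MeasurableSpace.measurableSet_top (s := {s | {j | ∃ q ∈ s.1.1, q.2 = j} = A k}))

variable [MeasurableSpace Ω] {μ : Measure Ω}

lemma pastGenerations_le (hB_meas : ∀ n i m j, Measurable (B n i m j)) (k : ℕ) :
    pastGenerations B k ≤ ‹MeasurableSpace Ω› :=
  iSup₂_le fun _ _ => (hB_meas _ _ _ _).comap_le

lemma measure_agreeUpTo_prunedMarks_succ (l : Fin N → ℝ)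
    (hB_meas : ∀ n i m j, Measurable (B n i m j))
    (hB_indep : iIndepFun (fun q : ℕ × ℕ × Fin N × Fin N => B q.1 q.2.1 q.2.2.1 q.2.2.2) μ)
    (hB_poisson : ∀ n i m j, μ.map (B n i m j) =
      poissonMeasure (Real.toNNReal (l m * l j / ∑ k, l k))) (k : ℕ) :
    μ (agreeUpTo (fun ω => prunedMarks N (fun a i m j => B a i m j ω) r) A (k + 1)) =
      μ (agreeUpTo (fun ω => prunedMarks N (fun a i m j => B a i m j ω) r) A k) *
        shellWeight (fun m j => edgeRate l s(m, j)) (A k) (⋃ i ≤ k, A i) (A (k + 1)) := by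
  let Φ := fun ω => ((prunedState N (fun a i m j => B a i m j ω) r k,
    fullGen N (fun a i m j => B a i m j ω) r k) : ProcessState N)
  let key (s : ProcessState N) (p : FreshPairs (A k) (⋃ i ≤ k, A i)) : ℕ × ℕ × Fin N × Fin N :=
    (k, posIn s.1.1 p.1.1, p.1.1, p.1.2)
  let G (s : ProcessState N) : Set Ω :=
    (fun ω p => B (key s p).1 (key s p).2.1 (key s p).2.2.1 (key s p).2.2.2 ω) ⁻¹'
      {x | reachedBy x = A (k + 1)}
  have hsplit : agreeUpTo (fun ω => prunedMarks N (fun a i m j => B a i m j ω) r) A (k + 1) =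
      agreeUpTo (fun ω => prunedMarks N (fun a i m j => B a i m j ω) r) A k ∩
        {ω | ω ∈ G (Φ ω)} := by
    rw [agreeUpTo_succ]
    ext ω
    exact and_congr_right fun hω => by
      rw [Set.mem_ofPred_eq, prunedMarks_succ_eq_reachedBy _ _ hω]
      rfl
  have hΦ : ∀ s, MeasurableSet[pastGenerations B k] (Φ ⁻¹' {s}) :=
    fun s => measurable_prunedState_fullGen B r k trivial
  have hD := measurableSet_agreeUpTo_prunedMarks B r A k
  have hle := pastGenerations_le B hB_meas k
  rw [hsplit]
  refine measure_inter_setOf_mem_eq_mul (G := G) (fun s => hle _ (hΦ s)) (hle _ hD)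
    (fun s => measurable_pi_lambda _ (fun p => hB_meas _ _ _ _) (measurableSet_reachedBy_eq _))
    fun s => ?_
  rw [measure_inter_preimage_eq_mul_pi (fun q => hB_meas _ _ _ _) hB_indep
    (P := {q | q.1 < k}) (key := key s) ((hΦ s).inter hD)
    (fun p p' h => Subtype.ext (Prod.ext (congrArg (·.2.2.1) h) (congrArg (·.2.2.2) h)))
    (fun p => lt_irrefl k) (measurableSet_reachedBy_eq _)]
  simp only [hB_poisson]
  rfl

end BranchingExploration

section Coupling

variable {Ω : Type*} [MeasurableSpace Ω] {μ : Measure Ω} {N : ℕ} (A : ℕ → Set (Fin N))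

lemma prunedMarks_zero (b : ℕ → ℕ → Fin N → Fin N → ℕ) (r : Fin N) : prunedMarks N b r 0 = {r} := by
  ext
  simp [prunedMarks, prunedState, eq_comm]

lemma measure_agreeUpTo_prunedMarks_eq_shells (l : Fin N → ℝ)
    (B : ℕ → ℕ → Fin N → Fin N → Ω → ℕ) (hB_meas : ∀ n i m j, Measurable (B n i m j))
    (hB_indep : iIndepFun (fun q : ℕ × ℕ × Fin N × Fin N => B q.1 q.2.1 q.2.2.1 q.2.2.2) μ)
    (hB_poisson : ∀ n i m j, μ.map (B n i m j) =
      poissonMeasure (Real.toNNReal (l m * l j / ∑ k, l k)))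
    (E : Sym2 (Fin N) → Ω → ℕ) (hE_meas : ∀ e, Measurable (E e)) (hE_indep : iIndepFun E μ)
    (hE_poisson : ∀ e, μ.map (E e) = poissonMeasure (edgeRate l e)) (v : Fin N) (n : ℕ) :
    μ (agreeUpTo (fun ω => prunedMarks N (fun a i m j => B a i m j ω) v) A n) =
      μ (agreeUpTo (fun ω => shells N (graphOf fun e => E e ω) v) A n) := by
  induction n with
  | zero => simp only [agreeUpTo_zero, prunedMarks_zero]; rfl
  | succ n ih =>
    rw [measure_agreeUpTo_prunedMarks_succ B v A l hB_meas hB_indep hB_poisson,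
      measure_agreeUpTo_shells_succ A v E l hE_meas hE_indep hE_poisson, ih]

lemma measure_agreeUpTo_prunedMarks_eq_sum (B : ℕ → ℕ → Fin N → Fin N → Ω → ℕ)
    (hB_meas : ∀ n i m j, Measurable (B n i m j)) (J0 : Ω → Fin N) (hJ0_meas : Measurable J0)
    (hJ0_indep : IndepFun J0
      (fun ω (q : ℕ × ℕ × Fin N × Fin N) => B q.1 q.2.1 q.2.2.1 q.2.2.2 ω) μ) (n : ℕ) :
    μ (agreeUpTo (fun ω => prunedMarks N (fun a i m j => B a i m j ω) (J0 ω)) A n) =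
      ∑ v, μ {ω | J0 ω = v} *
        μ (agreeUpTo (fun ω => prunedMarks N (fun a i m j => B a i m j ω) v) A n) :=
  measure_setOf_mem_eq_sum_mul_of_indep hJ0_meas
    (measurable_pi_lambda _ fun _ => hB_meas _ _ _ _).comap_le
    ((IndepFun_iff_Indep _ _ _).1 hJ0_indep) fun v => iSup_comap_le_comap_pi _ _ _
      (measurableSet_agreeUpTo_prunedMarks B v A n)

lemma measure_agreeUpTo_shells_eq_sum (E : Sym2 (Fin N) → Ω → ℕ)
    (hE_meas : ∀ e, Measurable (E e)) (i0 : Ω → Fin N) (hi0_meas : Measurable i0)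
    (hi0_indep : IndepFun i0 (fun ω e => E e ω) μ) (n : ℕ) :
    μ (agreeUpTo (fun ω => shells N (graphOf fun e => E e ω) (i0 ω)) A n) =
      ∑ v, μ {ω | i0 ω = v} * μ (agreeUpTo (fun ω => shells N (graphOf fun e => E e ω) v) A n) :=
  measure_setOf_mem_eq_sum_mul_of_indep hi0_meas
    (measurable_pi_lambda _ hE_meas).comap_le
    ((IndepFun_iff_Indep _ _ _).1 hi0_indep) fun v => iSup_comap_le_comap_pi _ _ _
      (measurableSet_agreeUpTo_shells A v E n)

end Coupling

theorem branching_process_coupling_general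
    (N : ℕ)
    (l : Fin N → ℝ)
    (Ω : Type) [MeasurableSpace Ω] (μ : Measure Ω)
    (B : ℕ → ℕ → Fin N → Fin N → Ω → ℕ)
    (hB_meas : ∀ n i m j, Measurable (B n i m j))
    (hB_indep : iIndepFun
      (fun q : ℕ × ℕ × Fin N × Fin N => B q.1 q.2.1 q.2.2.1 q.2.2.2) μ)
    (hB_poisson : ∀ n i m j, μ.map (B n i m j) =
      poissonMeasure (Real.toNNReal (l m * l j / ∑ k, l k)))
    (J0 : Ω → Fin N) (hJ0_meas : Measurable J0)
    (hJ0_unif : ∀ v, μ {ω | J0 ω = v} = (N : ENNReal)⁻¹)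
    (hJ0_indep : IndepFun J0
      (fun ω (q : ℕ × ℕ × Fin N × Fin N) => B q.1 q.2.1 q.2.2.1 q.2.2.2 ω) μ)
    (E : Sym2 (Fin N) → Ω → ℕ)
    (hE_meas : ∀ e, Measurable (E e))
    (hE_indep : iIndepFun E μ)
    (hE_poisson : ∀ e, μ.map (E e) = poissonMeasure (edgeRate l e))
    (i0 : Ω → Fin N) (hi0_meas : Measurable i0)
    (hi0_unif : ∀ v, μ {ω | i0 ω = v} = (N : ENNReal)⁻¹)
    (hi0_indep : IndepFun i0 (fun ω e => E e ω) μ) :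
    ∀ (n : ℕ) (A : ℕ → Set (Fin N)),
      μ {ω | ∀ k ≤ n, prunedMarks N (fun a b c d => B a b c d ω) (J0 ω) k = A k} =
        μ {ω | ∀ k ≤ n, shells N (graphOf fun e => E e ω) (i0 ω) k = A k} := by
  intro n A
  refine (measure_agreeUpTo_prunedMarks_eq_sum A B hB_meas J0 hJ0_meas hJ0_indep n).trans
    (Eq.trans ?_ (measure_agreeUpTo_shells_eq_sum A E hE_meas i0 hi0_meas hi0_indep n).symm)
  refine Finset.sum_congr rfl fun v _ => ?_
  rw [hJ0_unif, hi0_unif, measure_agreeUpTo_prunedMarks_eq_shells A l B hB_meas hB_indep hB_poisson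
    E hE_meas hE_indep hE_poisson]

/-- Proposition 2.1 of Norros–Reittu, the branching-process
coupling. Conditionally on the capacities `l` (here fixed), the sequence of mark
sets `(Ĵ_k)` of the pruned marked branching process has the same distribution as
the sequence of neighbourhood shells `(N_k)` around a uniformly random vertex of
the conditionally Poissonian graph.  The branching process is encoded by an
independent family `B n i m j ~ Poisson(l m l j / L_N)` giving the number of
`j`-marked children of the `i`-th individual of generation `n` when it bears mark
`m`, together with an independent uniform root mark `J0`; the graph is encoded by
independent edge counts `E {i,j} ~ Poisson(l i l j / L_N)` and an independent
uniform starting vertex `i0`.  Equality in distribution is expressed through all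
finite-dimensional cylinder events. -/
theorem branching_process_coupling
    (τ : ℝ) (hτ : τ ∈ Set.Ioo (2 : ℝ) 3)
    (N : ℕ) (hN : 0 < N)
    (l : Fin N → ℝ) (hl : ∀ i, 1 ≤ l i)
    (Ω : Type) [MeasurableSpace Ω] (μ : Measure Ω) [IsProbabilityMeasure μ]
    (B : ℕ → ℕ → Fin N → Fin N → Ω → ℕ)
    (hB_meas : ∀ n i m j, Measurable (B n i m j))
    (hB_indep : iIndepFun
      (fun q : ℕ × ℕ × Fin N × Fin N => B q.1 q.2.1 q.2.2.1 q.2.2.2) μ)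
    (hB_poisson : ∀ n i m j, μ.map (B n i m j) =
      poissonMeasure (Real.toNNReal (l m * l j / ∑ k, l k)))
    (J0 : Ω → Fin N) (hJ0_meas : Measurable J0)
    (hJ0_unif : ∀ v, μ {ω | J0 ω = v} = (N : ENNReal)⁻¹)
    (hJ0_indep : IndepFun J0
      (fun ω (q : ℕ × ℕ × Fin N × Fin N) => B q.1 q.2.1 q.2.2.1 q.2.2.2 ω) μ)
    (E : Sym2 (Fin N) → Ω → ℕ)
    (hE_meas : ∀ e, Measurable (E e))
    (hE_indep : iIndepFun E μ)
    (hE_poisson : ∀ e, μ.map (E e) = poissonMeasure (edgeRate l e))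
    (i0 : Ω → Fin N) (hi0_meas : Measurable i0)
    (hi0_unif : ∀ v, μ {ω | i0 ω = v} = (N : ENNReal)⁻¹)
    (hi0_indep : IndepFun i0 (fun ω e => E e ω) μ) :
    ∀ (n : ℕ) (A : ℕ → Set (Fin N)),
      μ {ω | ∀ k ≤ n, prunedMarks N (fun a b c d => B a b c d ω) (J0 ω) k = A k} =
        μ {ω | ∀ k ≤ n, shells N (graphOf fun e => E e ω) (i0 ω) k = A k} :=
  branching_process_coupling_general N l Ω μ B hB_meas hB_indep hB_poisson J0 hJ0_meas hJ0_unif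
    hJ0_indep E hE_meas hE_indep hE_poisson i0 hi0_meas hi0_unif hi0_indep
end
end
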